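/- arXiv:2311.06109 — 16 statements merged into one kernel-verified Lean document; each statement's English description precedes it below -/
import Mathlib

section
/- A pseudo-Kleene lattice A is sp-orthomodular (i.e., satisfies both (SP1) and (SP2)) if and only if it satisfies the quasi-equation (sp): for all x, y, x ≤ y implies y ∧ (x ∨ x') = x ∨ (x' ∧ y). -/
/-- A pseudo-Kleene lattice is sp-orthomodular (satisfies (SP1) and (SP2))
iff it satisfies the quasi-equation (sp). -/
theorem stmt_0 {α : Type*} [Lattice α] [BoundedOrder α] (inv : α → α)
    (hanti : ∀ x y : α, x ≤ y → inv y ≤ inv x)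
    (hinv : ∀ x : α, inv (inv x) = x)
    (hkle : ∀ x y : α, x ⊓ inv x ≤ y ⊔ inv y) :
    ((∀ x y : α, x ≤ y → inv x ⊓ y = (x ⊓ inv x) ⊔ (y ⊓ inv y) →
        y ⊓ (x ⊔ inv x) = x ⊔ (y ⊓ inv y)) ∧
     (∀ x y : α, x ≤ y →
        (x ⊓ inv x) ⊔ (y ⊓ inv y) = (inv x ⊓ y) ⊓ inv (inv x ⊓ y))) ↔
    (∀ x y : α, x ≤ y → y ⊓ (x ⊔ inv x) = x ⊔ (inv x ⊓ y)) := by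
  -- De Morgan laws from the antitone involution
  have dm_inf : ∀ a b : α, inv (a ⊓ b) = inv a ⊔ inv b := by
    intro a b
    refine le_antisymm ?_ (sup_le (hanti _ _ inf_le_left) (hanti _ _ inf_le_right))
    have h1 : inv (inv a ⊔ inv b) ≤ a ⊓ b := by
      refine le_inf ?_ ?_
      · have h := hanti _ _ (le_sup_left : inv a ≤ inv a ⊔ inv b)
        rwa [hinv] at h
      · have h := hanti _ _ (le_sup_right : inv b ≤ inv a ⊔ inv b)
        rwa [hinv] at h
    have h2 := hanti _ _ h1
    rwa [hinv] at h2
  have dm_sup : ∀ a b : α, inv (a ⊔ b) = inv a ⊓ inv b := by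
    intro a b
    have h := dm_inf (inv a) (inv b)
    rw [hinv, hinv] at h
    rw [← hinv (inv a ⊓ inv b), h]
  constructor
  · rintro ⟨h1, h2⟩ x y hxy
    set Z := inv x ⊓ y with hz
    set S := y ⊓ (x ⊔ inv x) with hs
    have hxS : x ≤ S := le_inf hxy le_sup_left
    have hZS : Z ≤ S := by
      rw [hz, hs]; exact le_inf inf_le_right (inf_le_left.trans le_sup_right)
    have hZx' : Z ≤ inv x := by rw [hz]; exact inf_le_left
    have hxZ' : x ≤ inv Z := by
      have h := hanti _ _ hZx'
      rwa [hinv] at h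
    have hA : inv x ⊓ S = Z := by
      rw [hs, hz, ← inf_assoc]
      exact inf_eq_left.2 (inf_le_left.trans le_sup_right)
    -- SP2 at (x, S)
    have hSP2xs := h2 x S hxS
    rw [hA] at hSP2xs
    have hxx'S : x ⊓ inv x ≤ S ⊓ inv S := by
      have hSle : S ≤ x ⊔ inv x := by rw [hs]; exact inf_le_right
      have h7 : inv (x ⊔ inv x) ≤ inv S := hanti _ _ hSle
      have h8 : x ⊓ inv x ≤ inv (x ⊔ inv x) := by
        rw [dm_sup, hinv]; exact le_inf inf_le_right inf_le_left
      refine le_inf ?_ (h8.trans h7)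
      rw [hs]
      exact le_inf (inf_le_left.trans hxy) (inf_le_left.trans le_sup_left)
    have hTS : S ⊓ inv S = Z ⊓ inv Z := (sup_eq_right.2 hxx'S).symm.trans hSP2xs
    -- SP2 at (Z, inv x)
    have hSP2zx := h2 Z (inv x) hZx'
    rw [hinv] at hSP2zx
    have hx'x_T : inv x ⊓ x ≤ Z ⊓ inv Z := by
      refine le_inf ?_ (inf_le_right.trans hxZ')
      rw [hz]
      exact le_inf inf_le_left (inf_le_right.trans hxy)
    have hTt : Z ⊓ inv Z = (inv Z ⊓ inv x) ⊓ inv (inv Z ⊓ inv x) :=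
      (sup_eq_left.2 hx'x_T).symm.trans hSP2zx
    -- S ⊓ (inv Z ⊓ inv x) = Z ⊓ inv Z
    have hSB : S ⊓ (inv Z ⊓ inv x) = Z ⊓ inv Z := by
      rw [inf_comm (inv Z) (inv x), ← inf_assoc, inf_comm S (inv x), hA]
    have hS'B : inv S ≤ inv Z ⊓ inv x := le_inf (hanti _ _ hZS) (hanti _ _ hxS)
    -- SP1 at (inv S, inv Z ⊓ inv x)
    have hyp : inv (inv S) ⊓ (inv Z ⊓ inv x) =
        (inv S ⊓ inv (inv S)) ⊔ ((inv Z ⊓ inv x) ⊓ inv (inv Z ⊓ inv x)) := by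
      rw [hinv, hSB, inf_comm (inv S) S, hTS, ← hTt, sup_idem]
    have hconc := h1 (inv S) (inv Z ⊓ inv x) hS'B hyp
    rw [hinv, ← hTt] at hconc
    have hTleS' : Z ⊓ inv Z ≤ inv S := by rw [← hTS]; exact inf_le_right
    rw [sup_eq_left.2 hTleS'] at hconc
    -- hconc : (inv Z ⊓ inv x) ⊓ (inv S ⊔ S) = inv S
    refine le_antisymm ?_ (sup_le hxS hZS)
    calc S = inv (inv S) := (hinv S).symm
      _ = inv ((inv Z ⊓ inv x) ⊓ (inv S ⊔ S)) := by rw [hconc]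
      _ = inv (inv Z ⊓ inv x) ⊔ inv (inv S ⊔ S) := dm_inf _ _
      _ = (Z ⊔ x) ⊔ (S ⊓ inv S) := by
            rw [dm_inf (inv Z) (inv x), dm_sup (inv S) S, hinv, hinv, hinv]
      _ = (Z ⊔ x) ⊔ (Z ⊓ inv Z) := by rw [hTS]
      _ ≤ x ⊔ Z := sup_le (sup_le le_sup_right le_sup_left)
            (inf_le_left.trans le_sup_right)
  · intro hsp
    constructor
    · intro x y hxy h
      rw [hsp x y hxy, h, ← sup_assoc, sup_inf_self]
    · intro x y hxy
      have e1 := hsp x (y ⊔ inv y) (hxy.trans le_sup_left)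
      have e2 := hsp (inv y) (inv x) (hanti x y hxy)
      rw [hinv] at e2
      have e3 : (x ⊔ inv x) ⊓ (y ⊔ inv y) = (inv x ⊓ y) ⊔ inv (inv x ⊓ y) := by
        rw [dm_inf (inv x) y, hinv]
        rw [inf_comm (x ⊔ inv x) (y ⊔ inv y), e1, sup_comm y (inv y), e2,
            inf_comm y (inv x), ← sup_assoc]
        exact sup_comm _ _
      have e4 : inv ((x ⊔ inv x) ⊓ (y ⊔ inv y)) = (x ⊓ inv x) ⊔ (y ⊓ inv y) := by
        rw [dm_inf (x ⊔ inv x) (y ⊔ inv y), dm_sup x (inv x), dm_sup y (inv y),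
            hinv, hinv, inf_comm (inv x) x, inf_comm (inv y) y]
      have e5 : inv ((inv x ⊓ y) ⊔ inv (inv x ⊓ y)) = (inv x ⊓ y) ⊓ inv (inv x ⊓ y) := by
        rw [dm_sup (inv x ⊓ y) (inv (inv x ⊓ y)), hinv]
        exact inf_comm _ _
      rw [← e4, ← e5]
      exact congrArg inv e3
end

section
/- A pseudo-Kleene lattice A is sp-orthomodular if and only if the equation (x ∨ y) ∧ (x ∨ x') = x ∨ ((x ∨ y) ∧ x') holds for all x, y in A. -/
theorem my_dm_sup {α : Type*} [Lattice α] (inv : α → α)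
    (hanti : ∀ x y : α, x ≤ y → inv y ≤ inv x)
    (hinv : ∀ x : α, inv (inv x) = x) (a b : α) :
    inv (a ⊔ b) = inv a ⊓ inv b := by
  apply le_antisymm
  · exact le_inf (hanti _ _ le_sup_left) (hanti _ _ le_sup_right)
  · have h : a ⊔ b ≤ inv (inv a ⊓ inv b) := by
      apply sup_le
      · have := hanti _ _ (inf_le_left (a := inv a) (b := inv b))
        rwa [hinv] at this
      · have := hanti _ _ (inf_le_right (a := inv a) (b := inv b))
        rwa [hinv] at this
    have := hanti _ _ h
    rwa [hinv] at this

theorem my_dm_inf {α : Type*} [Lattice α] (inv : α → α)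
    (hanti : ∀ x y : α, x ≤ y → inv y ≤ inv x)
    (hinv : ∀ x : α, inv (inv x) = x) (a b : α) :
    inv (a ⊓ b) = inv a ⊔ inv b := by
  have h := my_dm_sup inv hanti hinv (inv a) (inv b)
  rw [hinv, hinv] at h
  rw [← h, hinv]

/-- A pseudo-Kleene lattice is sp-orthomodular iff the equation
(x ∨ y) ∧ (x ∨ x') = x ∨ ((x ∨ y) ∧ x') holds. -/
theorem stmt_1 {α : Type*} [Lattice α] [BoundedOrder α] (inv : α → α)
    (hanti : ∀ x y : α, x ≤ y → inv y ≤ inv x)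
    (hinv : ∀ x : α, inv (inv x) = x)
    (hkle : ∀ x y : α, x ⊓ inv x ≤ y ⊔ inv y) :
    ((∀ x y : α, x ≤ y → inv x ⊓ y = (x ⊓ inv x) ⊔ (y ⊓ inv y) →
        y ⊓ (x ⊔ inv x) = x ⊔ (y ⊓ inv y)) ∧
     (∀ x y : α, x ≤ y →
        (x ⊓ inv x) ⊔ (y ⊓ inv y) = (inv x ⊓ y) ⊓ inv (inv x ⊓ y))) ↔
    (∀ x y : α, (x ⊔ y) ⊓ (x ⊔ inv x) = x ⊔ ((x ⊔ y) ⊓ inv x)) := by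
  have dmS := my_dm_sup inv hanti hinv
  have dmI := my_dm_inf inv hanti hinv
  constructor
  · rintro ⟨sp1, sp2⟩ x y
    set z := x ⊔ y with hzdef
    set p := z ⊓ inv x with hpdef
    set t := x ⊔ p with htdef
    set v := z ⊓ (x ⊔ inv x) with hvdef
    show v = t
    have hxz : x ≤ z := le_sup_left
    have htz : t ≤ z := sup_le hxz inf_le_left
    have hxt : x ≤ t := le_sup_left
    have htx' : inv t ≤ inv x := hanti _ _ hxt
    have htv : t ≤ v := le_inf htz (sup_le le_sup_left (inf_le_right.trans le_sup_right))
    have hvz : v ≤ z := inf_le_left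
    have hxv : x ≤ v := hxt.trans htv
    have hp' : inv p = inv z ⊔ x := by rw [hpdef, dmI, hinv]
    have ht' : inv t = inv x ⊓ inv p := by rw [htdef, dmS]
    have hv' : inv v = inv z ⊔ (inv x ⊓ x) := by rw [hvdef, dmI, dmS x (inv x), hinv]
    have hA : inv t ⊓ v = t ⊓ inv t := by
      apply le_antisymm
      · refine le_inf ?_ inf_le_left
        have hp1 : inv t ⊓ v ≤ p := le_inf (inf_le_right.trans hvz) (inf_le_left.trans htx')
        exact hp1.trans le_sup_right
      · exact le_inf inf_le_right (inf_le_left.trans htv)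
    have hsp2xv := sp2 x v hxv
    have hvv'x : v ⊓ inv v ≤ inv x := by
      have h1 : v ⊓ inv v ≤ (x ⊓ inv x) ⊔ (v ⊓ inv v) := le_sup_right
      rw [hsp2xv] at h1
      exact h1.trans (inf_le_left.trans inf_le_left)
    have hvv't : v ⊓ inv v ≤ t :=
      (le_inf (inf_le_left.trans hvz) hvv'x).trans le_sup_right
    have hvv't' : v ⊓ inv v ≤ inv t := by
      have h2 : inv v ≤ inv z ⊔ x := by
        rw [hv']; exact sup_le le_sup_left (inf_le_right.trans le_sup_right)
      rw [ht', hp']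
      exact le_inf hvv'x (inf_le_right.trans h2)
    have hhyp : inv t ⊓ v = (t ⊓ inv t) ⊔ (v ⊓ inv v) := by
      rw [hA]; exact (sup_eq_left.mpr (le_inf hvv't hvv't')).symm
    have hsp1 := sp1 t v htv hhyp
    have htt'p : t ⊓ inv t ≤ p := le_inf (inf_le_left.trans htz) (inf_le_right.trans htx')
    have htt'p' : t ⊓ inv t ≤ inv p := by
      have h3 : inv t ≤ inv p := by rw [ht']; exact inf_le_right
      exact inf_le_right.trans h3
    have hsp2zx := sp2 (inv z) (inv x) (hanti _ _ hxz)
    rw [hinv, hinv] at hsp2zx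
    have hpp'v : p ⊓ inv p ≤ inv v := by
      rw [hpdef, ← hsp2zx, hv']
      exact sup_le (inf_le_left.trans le_sup_left) le_sup_right
    have htt'v' : t ⊓ inv t ≤ inv v := (le_inf htt'p htt'p').trans hpp'v
    have hvtt' : v ≤ t ⊔ inv t := by
      have h4 := hanti _ _ htt'v'
      rw [hinv, dmI, hinv] at h4
      exact h4.trans (sup_comm (inv t) t).le
    calc v = v ⊓ (t ⊔ inv t) := (inf_eq_left.mpr hvtt').symm
      _ = t ⊔ (v ⊓ inv v) := hsp1
      _ = t := sup_eq_left.mpr hvv't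
  · intro E
    have I : ∀ a b : α, a ≤ b → b ⊓ (a ⊔ inv a) = a ⊔ (b ⊓ inv a) := by
      intro a b hab
      have h := E a b
      rwa [sup_eq_right.mpr hab] at h
    constructor
    · intro x y hxy hhyp
      calc y ⊓ (x ⊔ inv x) = x ⊔ (y ⊓ inv x) := I x y hxy
        _ = x ⊔ (inv x ⊓ y) := by rw [inf_comm y (inv x)]
        _ = x ⊔ ((x ⊓ inv x) ⊔ (y ⊓ inv y)) := by rw [hhyp]
        _ = (x ⊔ (x ⊓ inv x)) ⊔ (y ⊓ inv y) := by rw [sup_assoc]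
        _ = x ⊔ (y ⊓ inv y) := by rw [sup_inf_self]
    · intro x y hxy
      have hy'x' : inv y ≤ inv x := hanti _ _ hxy
      have hbeta : inv x ⊓ (inv y ⊔ y) = inv y ⊔ (inv x ⊓ y) := by
        have h := I (inv y) (inv x) hy'x'
        rwa [hinv] at h
      have hc' : inv (x ⊔ (y ⊓ inv y)) = inv y ⊔ (inv x ⊓ y) := by
        rw [dmS, dmI, hinv]
        exact hbeta
      have hm' : inv (y ⊓ (x ⊔ inv y)) = inv y ⊔ (inv x ⊓ y) := by
        rw [dmI, dmS, hinv]
      have hcm : x ⊔ (y ⊓ inv y) = y ⊓ (x ⊔ inv y) := by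
        have h := hc'.trans hm'.symm
        have h2 := congrArg inv h
        rwa [hinv, hinv] at h2
      have hwx' : x ≤ inv (y ⊓ inv y) := by
        rw [dmI, hinv]
        exact hxy.trans le_sup_right
      have hI0 := I x (inv (y ⊓ inv y)) hwx'
      -- hI0 : inv (y ⊓ inv y) ⊓ (x ⊔ inv x) = x ⊔ (inv (y ⊓ inv y) ⊓ inv x)
      have e1 : inv (inv (y ⊓ inv y) ⊓ (x ⊔ inv x)) = (y ⊓ inv y) ⊔ (inv x ⊓ x) := by
        rw [dmI, hinv, dmS, hinv]
      have e2 : inv (x ⊔ (inv (y ⊓ inv y) ⊓ inv x)) = inv x ⊓ ((y ⊓ inv y) ⊔ x) := by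
        rw [dmS, dmI, hinv, hinv]
      have hI' : (y ⊓ inv y) ⊔ (inv x ⊓ x) = inv x ⊓ ((y ⊓ inv y) ⊔ x) :=
        e1.symm.trans ((congrArg inv hI0).trans e2)
      have main : (inv x ⊓ y) ⊓ inv (inv x ⊓ y) = (x ⊓ inv x) ⊔ (y ⊓ inv y) := by
        calc (inv x ⊓ y) ⊓ inv (inv x ⊓ y)
            = (inv x ⊓ y) ⊓ (x ⊔ inv y) := by rw [dmI, hinv]
          _ = inv x ⊓ (y ⊓ (x ⊔ inv y)) := inf_assoc _ _ _
          _ = inv x ⊓ (x ⊔ (y ⊓ inv y)) := by rw [← hcm]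
          _ = inv x ⊓ ((y ⊓ inv y) ⊔ x) := by rw [sup_comm x (y ⊓ inv y)]
          _ = (y ⊓ inv y) ⊔ (inv x ⊓ x) := hI'.symm
          _ = (x ⊓ inv x) ⊔ (y ⊓ inv y) := by rw [inf_comm (inv x) x, sup_comm]
      exact main.symm
end

section
/- A pseudo-Kleene lattice A is sp-orthomodular if and only if the identity x ∨ ((x ∨ y) ∧ (x ∨ y)') = (x ∨ y) ∧ (x ∨ (x ∨ y)') holds for all x, y in A. -/
/-- A pseudo-Kleene lattice is sp-orthomodular iff the identity
x ∨ ((x ∨ y) ∧ (x ∨ y)') = (x ∨ y) ∧ (x ∨ (x ∨ y)') holds. -/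
theorem stmt_2 {α : Type*} [Lattice α] [BoundedOrder α] (inv : α → α)
    (hanti : ∀ x y : α, x ≤ y → inv y ≤ inv x)
    (hinv : ∀ x : α, inv (inv x) = x)
    (hkle : ∀ x y : α, x ⊓ inv x ≤ y ⊔ inv y) :
    ((∀ x y : α, x ≤ y → inv x ⊓ y = (x ⊓ inv x) ⊔ (y ⊓ inv y) →
        y ⊓ (x ⊔ inv x) = x ⊔ (y ⊓ inv y)) ∧
     (∀ x y : α, x ≤ y →
        (x ⊓ inv x) ⊔ (y ⊓ inv y) = (inv x ⊓ y) ⊓ inv (inv x ⊓ y))) ↔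
    (∀ x y : α, x ⊔ ((x ⊔ y) ⊓ inv (x ⊔ y)) = (x ⊔ y) ⊓ (x ⊔ inv (x ⊔ y))) := by
  have hmono : ∀ a b : α, inv a ≤ inv b → b ≤ a := fun a b h => by
    have h2 := hanti _ _ h; rwa [hinv, hinv] at h2
  have dm_sup : ∀ a b : α, inv (a ⊔ b) = inv a ⊓ inv b := by
    intro a b
    apply le_antisymm
    · exact le_inf (hanti _ _ le_sup_left) (hanti _ _ le_sup_right)
    · have h1 : a ⊔ b ≤ inv (inv a ⊓ inv b) :=
        sup_le (hmono _ _ (by rw [hinv]; exact inf_le_left))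
          (hmono _ _ (by rw [hinv]; exact inf_le_right))
      have h2 := hanti _ _ h1
      rwa [hinv] at h2
  have dm_inf : ∀ a b : α, inv (a ⊓ b) = inv a ⊔ inv b := by
    intro a b
    have h := dm_sup (inv a) (inv b)
    rw [hinv, hinv] at h
    rw [← h, hinv]
  constructor
  · rintro ⟨sp1, sp2⟩ x y
    suffices key : ∀ z : α, x ≤ z → x ⊔ z ⊓ inv z = z ⊓ (x ⊔ inv z) from
      key (x ⊔ y) le_sup_left
    intro z hxz
    have hinvc : inv (inv x ⊓ z) = x ⊔ inv z := by rw [dm_inf, hinv]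
    have e0 : (x ⊓ inv x) ⊔ (z ⊓ inv z) = (inv x ⊓ z) ⊓ (x ⊔ inv z) := by
      have h := sp2 x z hxz; rwa [hinvc] at h
    have hinvc2 : inv (z ⊓ (x ⊔ inv z)) = inv z ⊔ (inv x ⊓ z) := by
      rw [dm_inf, dm_sup, hinv]
    -- Step 1 : c ≤ x ⊔ inv x
    have step1 : z ⊓ (x ⊔ inv z) ≤ x ⊔ inv x := by
      have h1 : x ⊓ inv x ≤ inv (z ⊓ (x ⊔ inv z)) := by
        rw [hinvc2]
        exact le_sup_of_le_right (le_inf inf_le_right (le_trans inf_le_left hxz))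
      have h2 := hanti _ _ h1
      rw [hinv, dm_inf, hinv] at h2
      rwa [sup_comm (inv x) x] at h2
    -- Step 2 : c ⊓ inv c = (x ⊓ inv x) ⊔ (z ⊓ inv z)
    have step2 : (z ⊓ (x ⊔ inv z)) ⊓ inv (z ⊓ (x ⊔ inv z)) =
        (x ⊓ inv x) ⊔ (z ⊓ inv z) := by
      have s2 := sp2 (inv z) (x ⊔ inv z) le_sup_right
      rw [hinv, dm_sup, hinv] at s2
      have hcomm : (x ⊔ inv z) ⊓ (inv x ⊓ z) = (x ⊓ inv x) ⊔ (z ⊓ inv z) := by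
        rw [inf_comm, ← e0]
      rw [hcomm] at s2
      have habs : (inv z ⊓ z) ⊔ ((x ⊓ inv x) ⊔ (z ⊓ inv z)) =
          (x ⊓ inv x) ⊔ (z ⊓ inv z) := by
        rw [inf_comm]
        exact sup_eq_right.mpr le_sup_right
      rw [habs] at s2
      exact s2.symm
    -- Step 3 : SP1 applied to (x, c)
    have hxc : x ≤ z ⊓ (x ⊔ inv z) := le_inf hxz le_sup_left
    have hyp : inv x ⊓ (z ⊓ (x ⊔ inv z)) =
        (x ⊓ inv x) ⊔ ((z ⊓ (x ⊔ inv z)) ⊓ inv (z ⊓ (x ⊔ inv z))) := by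
      rw [step2, ← sup_assoc, sup_idem, ← inf_assoc, ← e0]
    have s1 := sp1 x (z ⊓ (x ⊔ inv z)) hxc hyp
    rw [inf_eq_left.mpr step1, step2, ← sup_assoc,
      sup_eq_left.mpr (inf_le_left : x ⊓ inv x ≤ x)] at s1
    exact s1.symm
  · intro hid
    have star : ∀ x z : α, x ≤ z → x ⊔ (z ⊓ inv z) = z ⊓ (x ⊔ inv z) := by
      intro x z h
      have h2 := hid x z
      rwa [sup_eq_right.mpr h] at h2
    constructor
    · -- SP1
      intro x y hxy H
      have E3 := star x y hxy
      have E4 := star (inv x ⊓ y) y inf_le_right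
      have hA : inv x ⊓ y = y ⊓ ((x ⊓ inv x) ⊔ inv y) := by
        have l1 : (inv x ⊓ y) ⊔ (y ⊓ inv y) = inv x ⊓ y := by
          rw [H, sup_assoc, sup_idem, ← H]
        have l2 : (inv x ⊓ y) ⊔ inv y = (x ⊓ inv x) ⊔ inv y := by
          rw [H, sup_assoc, sup_eq_right.mpr (inf_le_right : y ⊓ inv y ≤ inv y)]
        rw [l1, l2] at E4
        exact E4
      have hA' : x ⊔ inv y = inv y ⊔ ((x ⊔ inv x) ⊓ y) := by
        have := congrArg inv hA
        simp only [dm_inf, dm_sup, hinv] at this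
        rw [this, sup_comm (inv x) x]
      have key : y ⊓ (x ⊔ inv x) ≤ x ⊔ inv y := by
        rw [hA']
        rw [inf_comm]
        exact le_sup_right
      apply le_antisymm
      · rw [E3]
        exact le_inf inf_le_left key
      · exact sup_le (le_inf hxy le_sup_left) (le_inf inf_le_left (hkle y x))
    · -- SP2
      intro x y hxy
      have E1 : inv y ⊔ (inv x ⊓ x) = inv x ⊓ (inv y ⊔ x) := by
        have := star (inv y) (inv x) (hanti _ _ hxy)
        rwa [hinv] at this
      have E2 := star (x ⊓ inv x) y (le_trans inf_le_left hxy)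
      rw [dm_inf, hinv]
      calc (x ⊓ inv x) ⊔ (y ⊓ inv y)
          = y ⊓ ((x ⊓ inv x) ⊔ inv y) := E2
        _ = y ⊓ (inv y ⊔ (inv x ⊓ x)) := by rw [sup_comm, inf_comm x]
        _ = y ⊓ (inv x ⊓ (inv y ⊔ x)) := by rw [E1]
        _ = (inv x ⊓ y) ⊓ (x ⊔ inv y) := by
            rw [sup_comm (inv y) x, inf_comm (inv x) y, inf_assoc]
end

section
/- Every sp-orthomodular lattice satisfies: for all x, y, if x ≤ y then y ∧ (y' ∨ (x ∧ x')) = (y ∧ y') ∨ (x ∧ x'). -/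
/-- Every sp-orthomodular lattice satisfies:
x ≤ y implies y ∧ (y' ∨ (x ∧ x')) = (y ∧ y') ∨ (x ∧ x'). -/
theorem stmt_3 {α : Type*} [Lattice α] [BoundedOrder α] (inv : α → α)
    (hanti : ∀ x y : α, x ≤ y → inv y ≤ inv x)
    (hinv : ∀ x : α, inv (inv x) = x)
    (hkle : ∀ x y : α, x ⊓ inv x ≤ y ⊔ inv y)
    (hsp1 : ∀ x y : α, x ≤ y → inv x ⊓ y = (x ⊓ inv x) ⊔ (y ⊓ inv y) →
        y ⊓ (x ⊔ inv x) = x ⊔ (y ⊓ inv y))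
    (hsp2 : ∀ x y : α, x ≤ y →
        (x ⊓ inv x) ⊔ (y ⊓ inv y) = (inv x ⊓ y) ⊓ inv (inv x ⊓ y)) :
    ∀ x y : α, x ≤ y → y ⊓ (inv y ⊔ (x ⊓ inv x)) = (y ⊓ inv y) ⊔ (x ⊓ inv x) := by
  -- De Morgan law for ⊓, derived from antitonicity and involutivity
  have hdm : ∀ u v : α, inv (u ⊓ v) = inv u ⊔ inv v := by
    intro u v
    apply le_antisymm
    · have h1 : inv (inv u ⊔ inv v) ≤ u ⊓ v := by
        refine le_inf ?_ ?_
        · have := hanti (inv u) (inv u ⊔ inv v) le_sup_left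
          rwa [hinv] at this
        · have := hanti (inv v) (inv u ⊔ inv v) le_sup_right
          rwa [hinv] at this
      have := hanti _ _ h1
      rwa [hinv] at this
    · exact sup_le (hanti _ _ inf_le_left) (hanti _ _ inf_le_right)
  intro x y hxy
  set a := x ⊓ inv x with ha
  have hay : a ≤ y := le_trans inf_le_left hxy
  have hainv : inv a = inv x ⊔ x := by rw [ha, hdm, hinv]
  have haa : a ≤ inv a := by
    rw [hainv]; exact le_trans inf_le_left (le_sup_right)
  have h2 := hsp2 a y hay
  rw [inf_eq_left.mpr haa] at h2
  have hdm2 : inv (inv a ⊓ y) = a ⊔ inv y := by rw [hdm, hinv]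
  rw [hdm2] at h2
  -- h2 : a ⊔ y ⊓ inv y = inv a ⊓ y ⊓ (a ⊔ inv y)
  have hp : inv y ⊔ a ≤ inv a :=
    sup_le (le_trans (hanti x y hxy) (by rw [hainv]; exact le_sup_left)) haa
  have key : y ⊓ (inv y ⊔ a) = inv a ⊓ y ⊓ (a ⊔ inv y) := by
    rw [sup_comm a (inv y)]
    apply le_antisymm
    · exact le_inf (le_inf (le_trans inf_le_right hp) inf_le_left) inf_le_right
    · exact le_inf (le_trans inf_le_left inf_le_right) inf_le_right
  rw [key, ← h2, sup_comm]
end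

section
/- A pseudo-Kleene lattice satisfies (SP1) if and only if it satisfies the quasi-equation (@): for all x, y, if x ≤ y' and x' ∧ y' ≤ x ∧ y, then x = y'. -/
/-- A pseudo-Kleene lattice satisfies (SP1) iff it satisfies (@):
x ≤ y' and x' ∧ y' ≤ x ∧ y imply x = y'. -/
theorem stmt_4 {α : Type*} [Lattice α] [BoundedOrder α] (inv : α → α)
    (hanti : ∀ x y : α, x ≤ y → inv y ≤ inv x)
    (hinv : ∀ x : α, inv (inv x) = x)
    (hkle : ∀ x y : α, x ⊓ inv x ≤ y ⊔ inv y) :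
    (∀ x y : α, x ≤ y → inv x ⊓ y = (x ⊓ inv x) ⊔ (y ⊓ inv y) →
        y ⊓ (x ⊔ inv x) = x ⊔ (y ⊓ inv y)) ↔
    (∀ x y : α, x ≤ inv y → inv x ⊓ inv y ≤ x ⊓ y → x = inv y) := by
  -- De Morgan laws
  have dminf : ∀ a b : α, inv (a ⊓ b) = inv a ⊔ inv b := by
    intro a b
    refine le_antisymm ?_ (sup_le (hanti _ _ inf_le_left) (hanti _ _ inf_le_right))
    have h : inv (inv a ⊔ inv b) ≤ a ⊓ b := by
      refine le_inf ?_ ?_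
      · have := hanti _ _ (le_sup_left : inv a ≤ inv a ⊔ inv b)
        rwa [hinv] at this
      · have := hanti _ _ (le_sup_right : inv b ≤ inv a ⊔ inv b)
        rwa [hinv] at this
    have := hanti _ _ h
    rwa [hinv] at this
  have dmsup : ∀ a b : α, inv (a ⊔ b) = inv a ⊓ inv b := by
    intro a b
    refine le_antisymm (le_inf (hanti _ _ le_sup_left) (hanti _ _ le_sup_right)) ?_
    have h : a ⊔ b ≤ inv (inv a ⊓ inv b) := by
      refine sup_le ?_ ?_
      · have := hanti _ _ (inf_le_left : inv a ⊓ inv b ≤ inv a)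
        rwa [hinv] at this
      · have := hanti _ _ (inf_le_right : inv a ⊓ inv b ≤ inv b)
        rwa [hinv] at this
    have := hanti _ _ h
    rwa [hinv] at this
  constructor
  · -- (SP1) → (@)
    intro hSP x y hxy h1
    have hyx : y ≤ inv x := by
      have := hanti _ _ hxy; rwa [hinv] at this
    have hm1 : x ⊓ inv x = inv x ⊓ inv y :=
      le_antisymm (le_inf inf_le_right (inf_le_left.trans hxy))
        (le_inf (h1.trans inf_le_left) inf_le_left)
    have hm2 : inv y ⊓ y = x ⊓ inv x := by
      refine le_antisymm (le_inf ?_ (inf_le_right.trans hyx)) (le_inf (inf_le_left.trans hxy) ?_)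
      · exact (le_inf (inf_le_right.trans hyx) inf_le_left).trans (h1.trans inf_le_left)
      · exact (hm1.le.trans h1).trans inf_le_right
    have hhyp : inv x ⊓ inv y = (x ⊓ inv x) ⊔ (inv y ⊓ inv (inv y)) := by
      rw [hinv, hm2, sup_idem, hm1]
    have hc := hSP x (inv y) hxy hhyp
    rw [hinv, hm2, sup_inf_self] at hc
    have hle : inv y ≤ x ⊔ inv x := by
      have e : inv (x ⊓ inv x) = x ⊔ inv x := by
        rw [dminf, hinv, sup_comm]
      calc inv y ≤ inv (inv y ⊓ y) := hanti _ _ inf_le_right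
        _ = inv (x ⊓ inv x) := by rw [hm2]
        _ = x ⊔ inv x := e
    rw [inf_eq_left.mpr hle] at hc
    exact hc.symm
  · -- (@) → (SP1)
    intro hAt x y hxy hcond
    set q := y ⊓ (x ⊔ inv x) with hq
    set u := x ⊔ (y ⊓ inv y) with hu
    have hinvyx : inv y ≤ inv x := hanti _ _ hxy
    have huq : u ≤ inv (inv q) := by
      rw [hinv]
      exact sup_le (le_inf hxy le_sup_left)
        (le_inf inf_le_left ((inf_le_right.trans hinvyx).trans le_sup_right))
    have step1 : inv u ⊓ q ≤ (x ⊓ inv x) ⊔ (y ⊓ inv y) := by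
      have : inv u ⊓ q ≤ inv x ⊓ y :=
        inf_le_inf (hanti _ _ le_sup_left) inf_le_left
      exact this.trans hcond.le
    have step2 : (x ⊓ inv x) ⊔ (y ⊓ inv y) ≤ u :=
      sup_le (inf_le_left.trans le_sup_left) le_sup_right
    have step3 : (x ⊓ inv x) ⊔ (y ⊓ inv y) ≤ inv q := by
      refine sup_le ?_ (inf_le_right.trans (hanti _ _ inf_le_left))
      have h := hanti _ _ (inf_le_right : q ≤ x ⊔ inv x)
      rw [dmsup, hinv] at h
      exact (inf_comm x (inv x)).le.trans h
    have h2 : inv u ⊓ inv (inv q) ≤ u ⊓ inv q := by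
      rw [hinv]
      exact le_inf (step1.trans step2) (step1.trans step3)
    have heq := hAt u (inv q) huq h2
    rw [hinv] at heq
    exact heq.symm
end

section
/- A pseudo-Kleene lattice A satisfies (SP1) if and only if A contains no subalgebra isomorphic to B6 and no subalgebra isomorphic to B8; concretely, (SP1) holds iff there do not exist a, b in A with a ≠ 0, a < b, b ≠ 1, a ∧ a' = 0, b ∧ b' = 0 and a' ∧ b = 0 (a copy of B6), and there do not exist a, b in A with a < b, a ∧ a' = b ∧ b' = a' ∧ b ≠ 0, a and a' incomparable, and b and b' incomparable (a copy of B8). -/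
/-- A pseudo-Kleene lattice satisfies (SP1) iff it contains no copy of B6
and no copy of B8 (concrete formulations). -/
theorem stmt_5 {α : Type*} [Lattice α] [BoundedOrder α] (inv : α → α)
    (hanti : ∀ x y : α, x ≤ y → inv y ≤ inv x)
    (hinv : ∀ x : α, inv (inv x) = x)
    (hkle : ∀ x y : α, x ⊓ inv x ≤ y ⊔ inv y) :
    (∀ x y : α, x ≤ y → inv x ⊓ y = (x ⊓ inv x) ⊔ (y ⊓ inv y) →
        y ⊓ (x ⊔ inv x) = x ⊔ (y ⊓ inv y)) ↔
    ((¬ ∃ a b : α, a ≠ ⊥ ∧ a < b ∧ b ≠ ⊤ ∧ a ⊓ inv a = ⊥ ∧ b ⊓ inv b = ⊥ ∧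
        inv a ⊓ b = ⊥) ∧
     (¬ ∃ a b : α, a < b ∧ a ⊓ inv a = b ⊓ inv b ∧ b ⊓ inv b = inv a ⊓ b ∧
        inv a ⊓ b ≠ ⊥ ∧ ¬ a ≤ inv a ∧ ¬ inv a ≤ a ∧ ¬ b ≤ inv b ∧ ¬ inv b ≤ b)) := by
  have hinj : ∀ {u v : α}, inv u = inv v → u = v := by
    intro u v h
    rw [← hinv u, h, hinv]
  have hsup : ∀ u v : α, inv (u ⊔ v) = inv u ⊓ inv v := by
    intro u v
    refine le_antisymm (le_inf (hanti _ _ le_sup_left) (hanti _ _ le_sup_right)) ?_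
    have h1 : u ≤ inv (inv u ⊓ inv v) := by
      have := hanti _ _ (inf_le_left : inv u ⊓ inv v ≤ inv u)
      rwa [hinv] at this
    have h2 : v ≤ inv (inv u ⊓ inv v) := by
      have := hanti _ _ (inf_le_right : inv u ⊓ inv v ≤ inv v)
      rwa [hinv] at this
    have := hanti _ _ (sup_le h1 h2)
    rwa [hinv] at this
  have hinf : ∀ u v : α, inv (u ⊓ v) = inv u ⊔ inv v := by
    intro u v
    refine le_antisymm ?_ (sup_le (hanti _ _ inf_le_left) (hanti _ _ inf_le_right))
    have h1 : inv (inv u ⊔ inv v) ≤ u := by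
      have := hanti _ _ (le_sup_left : inv u ≤ inv u ⊔ inv v)
      rwa [hinv] at this
    have h2 : inv (inv u ⊔ inv v) ≤ v := by
      have := hanti _ _ (le_sup_right : inv v ≤ inv u ⊔ inv v)
      rwa [hinv] at this
    have := hanti _ _ (le_inf h1 h2)
    rwa [hinv] at this
  have hbot : inv ⊥ = ⊤ := by
    refine le_antisymm le_top ?_
    have := hanti _ _ (bot_le : (⊥ : α) ≤ inv ⊤)
    rwa [hinv] at this
  constructor
  · intro hSP
    constructor
    · rintro ⟨a, b, _, hab, _, haa, hbb, hab'⟩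
      have h1 := hSP a b hab.le (by rw [hab', haa, hbb, bot_sup_eq])
      have h2 : a ⊔ inv a = ⊤ := by
        have h3 : inv (a ⊔ inv a) = ⊥ := by rw [hsup, hinv, inf_comm, haa]
        have := congrArg inv h3
        rwa [hinv, hbot] at this
      rw [h2, inf_top_eq, hbb, sup_bot_eq] at h1
      exact hab.ne' h1
    · rintro ⟨a, b, hab, h1, h2, _, _, _, _, _⟩
      have hS := hSP a b hab.le (by rw [h1, sup_idem]; exact h2.symm)
      rw [← h1, sup_inf_self] at hS
      have := congrArg inv hS
      rw [hinf, hsup, hinv] at this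
      have h4 : inv a ⊓ a = b ⊓ inv b := by rw [inf_comm, h1]
      rw [h4, inf_comm b (inv b), sup_inf_self] at this
      exact hab.ne' (hinj this)
  · rintro ⟨hB6, hB8⟩ x y hxy hc
    by_contra hne
    set a := x ⊔ y ⊓ inv y with ha_def
    set b := y ⊓ (x ⊔ inv x) with hb_def
    set c := inv x ⊓ y with hc_def
    have hq_c : y ⊓ inv y ≤ c := hc ▸ le_sup_right
    have haleb : a ≤ b :=
      sup_le (le_inf hxy le_sup_left)
        (le_inf inf_le_left ((hq_c.trans inf_le_left).trans le_sup_right))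
    have halt : a < b := haleb.lt_of_ne (fun h => hne h.symm)
    have ha' : inv a = inv x ⊓ (inv y ⊔ y) := by
      rw [ha_def, hsup, hinf, hinv]
    have hb' : inv b = inv y ⊔ inv x ⊓ x := by
      rw [hb_def, hinf, hsup, hinv]
    have ha'x : inv a ≤ inv x := by rw [ha']; exact inf_le_left
    have hcb : c ≤ b := le_inf inf_le_right (inf_le_left.trans le_sup_right)
    have hca' : c ≤ inv a := by
      rw [ha']
      exact le_inf inf_le_left (inf_le_right.trans le_sup_right)
    have hca : c ≤ a := by
      rw [hc]
      exact sup_le (inf_le_left.trans le_sup_left) le_sup_right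
    have hcb' : c ≤ inv b := by
      rw [hc, hb']
      exact sup_le ((inf_comm x (inv x)).le.trans le_sup_right)
        (inf_le_right.trans le_sup_left)
    have key1 : inv a ⊓ b = c := by
      refine le_antisymm (le_inf (inf_le_left.trans ha'x) (inf_le_right.trans inf_le_left)) ?_
      exact le_inf hca' hcb
    have key2 : a ⊓ inv a = c := by
      refine le_antisymm (le_inf (inf_le_right.trans ha'x)
        (inf_le_left.trans (sup_le hxy inf_le_left))) ?_
      exact le_inf hca hca'
    have key3 : inv b ≤ inv a := hanti _ _ haleb
    have key4 : b ⊓ inv b = c := by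
      refine le_antisymm ?_ (le_inf hcb hcb')
      calc b ⊓ inv b ≤ inv a ⊓ b := le_inf (inf_le_right.trans key3) inf_le_left
        _ = c := key1
    by_cases hcbot : c = ⊥
    · apply hB6
      refine ⟨a, b, ?_, halt, ?_, key2.trans hcbot, key4.trans hcbot, key1.trans hcbot⟩
      · intro h
        have h2 : b = ⊥ := by
          have := key1.trans hcbot
          rwa [h, hbot, top_inf_eq] at this
        exact halt.ne (h.trans h2.symm)
      · intro h
        have h2 : inv a = ⊥ := by
          have := key1.trans hcbot
          rwa [h, inf_top_eq] at this
        have h3 : a = ⊤ := by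
          have := congrArg inv h2
          rwa [hinv, hbot] at this
        exact halt.ne (h3.trans h.symm)
    · apply hB8
      refine ⟨a, b, halt, key2.trans key4.symm, key4.trans key1.symm,
        fun h => hcbot (key1.symm.trans h), ?_, ?_, ?_, ?_⟩
      · intro h
        have hac : a = c := by rw [← key2, inf_eq_left.mpr h]
        have hab' : a ≤ inv b := hac.le.trans (key4.symm.le.trans inf_le_right)
        have hba : b ≤ inv a := by
          have := hanti _ _ hab'
          rwa [hinv] at this
        have hbc : b = c := by rw [← key1, inf_eq_right.mpr hba]
        exact halt.ne (hac.trans hbc.symm)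
      · intro h
        have h1 : inv a = c := by rw [← key2, inf_eq_right.mpr h]
        have hb'b : inv b ≤ b := key3.trans (h1.le.trans hcb)
        have h2 : inv b = c := by rw [← key4, inf_eq_right.mpr hb'b]
        exact halt.ne (hinj (h1.trans h2.symm))
      · intro h
        have h1 : b = c := by rw [← key4, inf_eq_left.mpr h]
        exact halt.not_ge (h1.le.trans hca)
      · intro h
        have h1 : inv b = c := by rw [← key4, inf_eq_right.mpr h]
        have h2 : inv b = inv a ⊓ b := h1.trans key1.symm
        have h3 : b = a ⊔ inv b := by
          have := congrArg inv h2
          rwa [hinv, hinf, hinv] at this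
        have h4 : b = a := by rw [h3, sup_eq_left.mpr (h1.le.trans hca)]
        exact halt.ne h4.symm
end

section
/- A pseudo-Kleene lattice A is paraorthomodular (for all x, y: x ≤ y and x' ∧ y = 0 imply x = y) if and only if A contains no subalgebra isomorphic to B6; concretely, paraorthomodularity holds iff there do not exist a, b in A with a ≠ 0, a < b, b ≠ 1, a ∧ a' = 0, b ∧ b' = 0 and a' ∧ b = 0. -/
/-- A pseudo-Kleene lattice is paraorthomodular iff it contains no
subalgebra isomorphic to B6 (concrete formulation). -/
theorem stmt_6 {α : Type*} [Lattice α] [BoundedOrder α] (inv : α → α)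
    (hanti : ∀ x y : α, x ≤ y → inv y ≤ inv x)
    (hinv : ∀ x : α, inv (inv x) = x)
    (hkle : ∀ x y : α, x ⊓ inv x ≤ y ⊔ inv y) :
    (∀ x y : α, x ≤ y → inv x ⊓ y = ⊥ → x = y) ↔
    ¬ ∃ a b : α, a ≠ ⊥ ∧ a < b ∧ b ≠ ⊤ ∧ a ⊓ inv a = ⊥ ∧ b ⊓ inv b = ⊥ ∧
        inv a ⊓ b = ⊥ := by
  have hinvtop : inv ⊤ = ⊥ := le_antisymm (by simpa [hinv] using hanti (inv ⊥) ⊤ le_top) bot_le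
  have hinvbot : inv ⊥ = ⊤ := by rw [← hinvtop, hinv]
  constructor
  · rintro hpar ⟨a, b, -, hab, -, -, -, hib⟩
    exact hab.ne (hpar a b hab.le hib)
  · intro hno x y hxy hxi
    by_contra hne
    have hlt : x < y := lt_of_le_of_ne hxy hne
    rcases eq_or_ne x ⊥ with hx | hx
    · subst hx
      rw [hinvbot, top_inf_eq] at hxi
      exact hne hxi.symm
    rcases eq_or_ne y ⊤ with hy | hy
    · subst hy
      rw [inf_top_eq] at hxi
      have : x = ⊤ := by rw [← hinv x, hxi, hinvbot]
      exact hne (this.trans rfl)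
    exact hno ⟨x, y, hx, hlt, hy,
      le_antisymm (by calc x ⊓ inv x ≤ y ⊓ inv x := inf_le_inf_right _ hxy
                      _ = inv x ⊓ y := inf_comm _ _
                      _ = ⊥ := hxi) bot_le,
      le_antisymm (by calc y ⊓ inv y ≤ y ⊓ inv x := inf_le_inf_left _ (hanti _ _ hxy)
                      _ = inv x ⊓ y := inf_comm _ _
                      _ = ⊥ := hxi) bot_le,
      hxi⟩
end

section
/- Let A be a pseudo-Kleene lattice and define the total operations x ⊙ y = 0 if x ≤ y' and x ⊙ y = y ∧ (x ∨ y') otherwise, and x → y = 1 if x ≤ y and x → y = x' ∨ (x ∧ y) otherwise. Then (A, ∧, ∨, ⊙, →, 0, 1) is a left-residuated ℓ-groupoid (i.e., x ⊙ 1 = x = 1 ⊙ x for all x, and x ⊙ y ≤ z if and only if x ≤ y → z, for all x, y, z) if and only if: (i) A is sp-orthomodular, and (ii) for all x, y, if x ≰ y then x ≤ y ∨ y' or y' ≤ x ∨ y. -/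
section Stmt7Aux

variable {α : Type*} [Lattice α]

private lemma s7_inv_inf (inv : α → α) (hanti : ∀ x y : α, x ≤ y → inv y ≤ inv x)
    (hinv : ∀ x : α, inv (inv x) = x) (a b : α) : inv (a ⊓ b) = inv a ⊔ inv b := by
  refine le_antisymm ?_ (sup_le (hanti _ _ inf_le_left) (hanti _ _ inf_le_right))
  have h1 : inv (inv a ⊔ inv b) ≤ a ⊓ b := by
    refine le_inf ?_ ?_
    · have := hanti _ _ (le_sup_left : inv a ≤ inv a ⊔ inv b); rwa [hinv] at this
    · have := hanti _ _ (le_sup_right : inv b ≤ inv a ⊔ inv b); rwa [hinv] at this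
  have := hanti _ _ h1; rwa [hinv] at this

private lemma s7_inv_sup (inv : α → α) (hanti : ∀ x y : α, x ≤ y → inv y ≤ inv x)
    (hinv : ∀ x : α, inv (inv x) = x) (a b : α) : inv (a ⊔ b) = inv a ⊓ inv b := by
  refine le_antisymm (le_inf (hanti _ _ le_sup_left) (hanti _ _ le_sup_right)) ?_
  have h1 : a ⊔ b ≤ inv (inv a ⊓ inv b) := by
    refine sup_le ?_ ?_
    · have := hanti _ _ (inf_le_left : inv a ⊓ inv b ≤ inv a); rwa [hinv] at this
    · have := hanti _ _ (inf_le_right : inv a ⊓ inv b ≤ inv b); rwa [hinv] at this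
  have := hanti _ _ h1; rwa [hinv] at this

/-- The "M law" `b ⊓ (a ⊔ b') = a ⊔ (b ⊓ b')` for `a ≤ b`, from SP1 and SP2. -/
private lemma s7_M (inv : α → α) (hanti : ∀ x y : α, x ≤ y → inv y ≤ inv x)
    (hinv : ∀ x : α, inv (inv x) = x)
    (hSP1 : ∀ x y : α, x ≤ y → inv x ⊓ y = (x ⊓ inv x) ⊔ (y ⊓ inv y) →
        y ⊓ (x ⊔ inv x) = x ⊔ (y ⊓ inv y))
    (hSP2 : ∀ x y : α, x ≤ y →
        (x ⊓ inv x) ⊔ (y ⊓ inv y) = (inv x ⊓ y) ⊓ inv (inv x ⊓ y))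
    {a b : α} (hab : a ≤ b) : b ⊓ (a ⊔ inv b) = a ⊔ (b ⊓ inv b) := by
  set g := b ⊓ (a ⊔ inv b) with hg
  have hb'a' : inv b ≤ inv a := hanti a b hab
  have hag : a ≤ g := le_inf hab le_sup_left
  have hg' : inv g = inv b ⊔ (inv a ⊓ b) := by
    rw [hg, s7_inv_inf inv hanti hinv, s7_inv_sup inv hanti hinv, hinv]
  have hinvab : inv (inv a ⊓ b) = a ⊔ inv b := by
    rw [s7_inv_inf inv hanti hinv, hinv]
  have hc0 : (a ⊓ inv a) ⊔ (b ⊓ inv b) = inv a ⊓ g := by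
    rw [hSP2 a b hab, hinvab, hg, inf_assoc]
  have hginvg_a' : inv g ≤ inv a := by
    rw [hg']; exact sup_le hb'a' inf_le_left
  have hgg_c0 : g ⊓ inv g ≤ inv a ⊓ g := le_inf (inf_le_right.trans hginvg_a') inf_le_left
  have hbb_g : b ⊓ inv b ≤ g ⊓ inv g := by
    refine le_inf (le_inf inf_le_left (inf_le_right.trans le_sup_right)) ?_
    rw [hg']; exact inf_le_right.trans le_sup_left
  have hyp : inv a ⊓ g = (a ⊓ inv a) ⊔ (g ⊓ inv g) := by
    refine le_antisymm ?_ (sup_le (le_inf inf_le_right (inf_le_left.trans hag)) hgg_c0)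
    calc inv a ⊓ g = (a ⊓ inv a) ⊔ (b ⊓ inv b) := hc0.symm
      _ ≤ (a ⊓ inv a) ⊔ (g ⊓ inv g) := sup_le_sup_left hbb_g _
  have hsp1 := hSP1 a g hag hyp
  have hga : g ≤ a ⊔ inv a := inf_le_right.trans (sup_le_sup_left hb'a' a)
  have hgeq : g = a ⊔ (g ⊓ inv g) := by rw [← hsp1, inf_eq_left.mpr hga]
  refine le_antisymm ?_ (sup_le hag (hbb_g.trans inf_le_left))
  calc g = a ⊔ (g ⊓ inv g) := hgeq
    _ ≤ a ⊔ ((a ⊓ inv a) ⊔ (b ⊓ inv b)) :=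
        sup_le_sup_left (hgg_c0.trans_eq hc0.symm) a
    _ ≤ a ⊔ (b ⊓ inv b) :=
        sup_le le_sup_left (sup_le (inf_le_left.trans le_sup_left) le_sup_right)

/-- Key lemma: if `u ≤ y`, `u ≰ y'`, `y ≰ u` then `y ⊓ y' ≤ u` (from SP2 and (ii)). -/
private lemma s7_key2 (inv : α → α) (hanti : ∀ x y : α, x ≤ y → inv y ≤ inv x)
    (hinv : ∀ x : α, inv (inv x) = x)
    (hSP2 : ∀ x y : α, x ≤ y →
        (x ⊓ inv x) ⊔ (y ⊓ inv y) = (inv x ⊓ y) ⊓ inv (inv x ⊓ y))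
    (hii : ∀ x y : α, ¬ x ≤ y → x ≤ y ⊔ inv y ∨ inv y ≤ x ⊔ y)
    {u y : α} (huy : u ≤ y) (h1 : ¬ u ≤ inv y) (h2 : ¬ y ≤ u) : y ⊓ inv y ≤ u := by
  by_cases hu'y : inv u ≤ y
  · have hyu : inv y ≤ u := by
      have := hanti _ _ hu'y; rwa [hinv] at this
    exact inf_le_right.trans hyu
  · have hk1 : ¬ inv u ≤ y ⊓ inv y := fun h => hu'y (h.trans inf_le_left)
    have hkk : y ⊓ inv y ≤ inv (y ⊓ inv y) := by
      rw [s7_inv_inf inv hanti hinv, hinv]; exact inf_le_right.trans le_sup_left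
    have huk : u ≤ inv (y ⊓ inv y) := by
      rw [s7_inv_inf inv hanti hinv, hinv]; exact huy.trans le_sup_right
    have e1 : u ⊓ inv (y ⊓ inv y) = u := inf_eq_left.mpr huk
    rcases hii (inv u) (y ⊓ inv y) hk1 with hA | hB
    · have hA' : inv u ≤ inv (y ⊓ inv y) := hA.trans (sup_le hkk le_rfl)
      have hs := hSP2 (inv u) (inv (y ⊓ inv y)) hA'
      simp only [hinv] at hs
      have e2 : inv (y ⊓ inv y) ⊓ (y ⊓ inv y) = y ⊓ inv y := inf_eq_right.mpr hkk
      rw [e1, e2] at hs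
      exact (le_sup_right.trans hs.le).trans inf_le_left
    · have h := hanti _ _ hB
      rw [s7_inv_sup inv hanti hinv] at h
      simp only [hinv] at h
      rw [e1] at h
      exact absurd (h.trans inf_le_right) h1

/-- The orthomodular-type law from SP1, SP2 and (ii). -/
private lemma s7_om (inv : α → α) (hanti : ∀ x y : α, x ≤ y → inv y ≤ inv x)
    (hinv : ∀ x : α, inv (inv x) = x)
    (hSP1 : ∀ x y : α, x ≤ y → inv x ⊓ y = (x ⊓ inv x) ⊔ (y ⊓ inv y) →
        y ⊓ (x ⊔ inv x) = x ⊔ (y ⊓ inv y))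
    (hSP2 : ∀ x y : α, x ≤ y →
        (x ⊓ inv x) ⊔ (y ⊓ inv y) = (inv x ⊓ y) ⊓ inv (inv x ⊓ y))
    (hii : ∀ x y : α, ¬ x ≤ y → x ≤ y ⊔ inv y ∨ inv y ≤ x ⊔ y)
    {u y : α} (huy : u ≤ y) (h1 : ¬ u ≤ inv y) (h2 : ¬ y ≤ u) :
    y ⊓ (u ⊔ inv y) ≤ u := by
  rw [s7_M inv hanti hinv hSP1 hSP2 huy]
  exact sup_le le_rfl (s7_key2 inv hanti hinv hSP2 hii huy h1 h2)

/-- The dual orthomodular-type law. -/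
private lemma s7_e1 (inv : α → α) (hanti : ∀ x y : α, x ≤ y → inv y ≤ inv x)
    (hinv : ∀ x : α, inv (inv x) = x)
    (hSP1 : ∀ x y : α, x ≤ y → inv x ⊓ y = (x ⊓ inv x) ⊔ (y ⊓ inv y) →
        y ⊓ (x ⊔ inv x) = x ⊔ (y ⊓ inv y))
    (hSP2 : ∀ x y : α, x ≤ y →
        (x ⊓ inv x) ⊔ (y ⊓ inv y) = (inv x ⊓ y) ⊓ inv (inv x ⊓ y))
    (hii : ∀ x y : α, ¬ x ≤ y → x ≤ y ⊔ inv y ∨ inv y ≤ x ⊔ y)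
    {y a : α} (hba : inv y ≤ a) (h1 : ¬ a ≤ inv y) (h2 : ¬ y ≤ a) :
    a ≤ inv y ⊔ (a ⊓ y) := by
  have hu : inv a ≤ y := by
    have := hanti _ _ hba; rwa [hinv] at this
  have hc1 : ¬ inv a ≤ inv y := fun h => by
    have := hanti _ _ h; rw [hinv, hinv] at this; exact h2 this
  have hc2 : ¬ y ≤ inv a := fun h => by
    have := hanti _ _ h; rw [hinv] at this; exact h1 this
  have hom := s7_om inv hanti hinv hSP1 hSP2 hii hu hc1 hc2
  have h3 := hanti _ _ hom
  rw [s7_inv_inf inv hanti hinv, s7_inv_sup inv hanti hinv] at h3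
  simp only [hinv] at h3
  exact h3

end Stmt7Aux

open Classical in
/-- with ⊙ and → defined by cases, (A,∧,∨,⊙,→,0,1) is a left-residuated
ℓ-groupoid iff A is sp-orthomodular and for all x,y, x ≰ y implies
x ≤ y ∨ y' or y' ≤ x ∨ y. -/
theorem stmt_7 {α : Type*} [Lattice α] [BoundedOrder α] (inv : α → α)
    (hanti : ∀ x y : α, x ≤ y → inv y ≤ inv x)
    (hinv : ∀ x : α, inv (inv x) = x)
    (hkle : ∀ x y : α, x ⊓ inv x ≤ y ⊔ inv y)
    (odot : α → α → α)
    (hodot : ∀ x y : α, odot x y = if x ≤ inv y then ⊥ else y ⊓ (x ⊔ inv y))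
    (arr : α → α → α)
    (harr : ∀ x y : α, arr x y = if x ≤ y then ⊤ else inv x ⊔ (x ⊓ y)) :
    ((∀ x : α, odot x ⊤ = x ∧ odot ⊤ x = x) ∧
     (∀ x y z : α, odot x y ≤ z ↔ x ≤ arr y z)) ↔
    (((∀ x y : α, x ≤ y → inv x ⊓ y = (x ⊓ inv x) ⊔ (y ⊓ inv y) →
        y ⊓ (x ⊔ inv x) = x ⊔ (y ⊓ inv y)) ∧
      (∀ x y : α, x ≤ y →
        (x ⊓ inv x) ⊔ (y ⊓ inv y) = (inv x ⊓ y) ⊓ inv (inv x ⊓ y))) ∧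
     (∀ x y : α, ¬ x ≤ y → x ≤ y ⊔ inv y ∨ inv y ≤ x ⊔ y)) := by
  constructor
  · rintro ⟨-, hres⟩
    have hD : ∀ x y z : α, ¬ x ≤ inv y → ¬ y ≤ z →
        (y ⊓ (x ⊔ inv y) ≤ z ↔ x ≤ inv y ⊔ (y ⊓ z)) := by
      intro x y z hxy hyz
      have := hres x y z
      rwa [hodot, harr, if_neg hxy, if_neg hyz] at this
    refine ⟨⟨?_, ?_⟩, ?_⟩
    · -- SP1
      intro x y hxy H
      refine le_antisymm ?_ (sup_le (le_inf hxy le_sup_left) (le_inf inf_le_left (hkle y x)))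
      by_cases ht : y ⊓ (x ⊔ inv x) ≤ x
      · exact ht.trans le_sup_left
      by_cases hx't : inv x ≤ y ⊓ (x ⊔ inv x)
      · have hx'y : inv x ≤ y := hx't.trans inf_le_left
        have hx'c : inv x ≤ x ⊔ (y ⊓ inv y) := by
          have hxx : inv x ⊓ y = inv x := inf_eq_left.mpr hx'y
          rw [hxx] at H
          rw [H]
          exact sup_le (inf_le_left.trans le_sup_left) le_sup_right
        exact inf_le_right.trans (sup_le le_sup_left hx'c)
      · have hcond1 : ¬ y ⊓ (x ⊔ inv x) ≤ inv (inv x) := by rwa [hinv]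
        have hcond2 : ¬ inv x ≤ inv x ⊓ (y ⊓ (x ⊔ inv x)) := fun h => hx't (h.trans inf_le_right)
        have hxt : x ≤ y ⊓ (x ⊔ inv x) := le_inf hxy le_sup_left
        have hlhs : inv x ⊓ (y ⊓ (x ⊔ inv x) ⊔ inv (inv x)) ≤ inv x ⊓ (y ⊓ (x ⊔ inv x)) := by
          rw [hinv, sup_eq_left.mpr hxt]
        have hmp := (hD (y ⊓ (x ⊔ inv x)) (inv x) (inv x ⊓ (y ⊓ (x ⊔ inv x))) hcond1 hcond2).mp hlhs
        rw [hinv] at hmp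
        refine hmp.trans (sup_le le_sup_left ?_)
        have hch : inv x ⊓ (inv x ⊓ (y ⊓ (x ⊔ inv x))) ≤ inv x ⊓ y :=
          le_inf inf_le_left (inf_le_right.trans (inf_le_right.trans inf_le_left))
        rw [H] at hch
        exact hch.trans (sup_le (inf_le_left.trans le_sup_left) le_sup_right)
    · -- SP2
      intro x y hxy
      have hinvm : inv (inv x ⊓ y) = x ⊔ inv y := by
        rw [s7_inv_inf inv hanti hinv, hinv]
      rw [hinvm]
      refine le_antisymm
        (sup_le
          (le_inf (le_inf inf_le_right (inf_le_left.trans hxy)) (inf_le_left.trans le_sup_left))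
          (le_inf (le_inf (inf_le_right.trans (hanti x y hxy)) inf_le_left)
            (inf_le_right.trans le_sup_right))) ?_
      by_cases hxy' : x ≤ inv y
      · have hr : (inv x ⊓ y) ⊓ (x ⊔ inv y) ≤ y ⊓ inv y :=
          le_inf (inf_le_left.trans inf_le_right) (inf_le_right.trans (sup_le hxy' le_rfl))
        exact hr.trans le_sup_right
      · have h1 : (inv x ⊓ y) ⊓ (x ⊔ inv y) ≤ x ⊔ (y ⊓ inv y) := by
          by_cases hyw : y ≤ x ⊔ (y ⊓ inv y)
          · exact (inf_le_left.trans inf_le_right).trans hyw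
          · have hc1 : ¬ x ⊔ (y ⊓ inv y) ≤ inv y := fun h => hxy' (le_sup_left.trans h)
            have hw_y : x ⊔ (y ⊓ inv y) ≤ y := sup_le hxy inf_le_left
            have hrhs : x ⊔ (y ⊓ inv y) ≤ inv y ⊔ (y ⊓ (x ⊔ (y ⊓ inv y))) :=
              (le_inf hw_y le_rfl).trans le_sup_right
            have hd := (hD (x ⊔ (y ⊓ inv y)) y (x ⊔ (y ⊓ inv y)) hc1 hyw).mpr hrhs
            refine le_trans ?_ hd
            exact le_inf (inf_le_left.trans inf_le_right)
              (inf_le_right.trans (sup_le (le_sup_left.trans le_sup_left) le_sup_right))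
        have h2 : inv x ⊓ (x ⊔ (y ⊓ inv y)) ≤ (x ⊓ inv x) ⊔ (y ⊓ inv y) := by
          by_cases hax : y ⊓ inv y ≤ x
          · rw [sup_eq_left.mpr hax]
            exact (le_inf inf_le_right inf_le_left).trans le_sup_left
          by_cases hx'c : inv x ≤ (x ⊓ inv x) ⊔ (y ⊓ inv y)
          · exact inf_le_left.trans hx'c
          · have hc1 : ¬ x ⊔ (y ⊓ inv y) ≤ inv (inv x) := by
              rw [hinv]; exact fun h => hax (le_sup_right.trans h)
            have hrhs : x ⊔ (y ⊓ inv y) ≤ inv (inv x) ⊔ (inv x ⊓ ((x ⊓ inv x) ⊔ (y ⊓ inv y))) := by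
              rw [hinv]
              exact sup_le le_sup_left
                ((le_inf (inf_le_right.trans (hanti x y hxy)) le_sup_right).trans le_sup_right)
            have hd := (hD (x ⊔ (y ⊓ inv y)) (inv x) ((x ⊓ inv x) ⊔ (y ⊓ inv y)) hc1 hx'c).mpr hrhs
            rw [hinv] at hd
            refine le_trans ?_ hd
            exact le_inf inf_le_left (inf_le_right.trans le_sup_left)
        exact (le_inf (inf_le_left.trans inf_le_left) h1).trans h2
    · -- (ii)
      intro x y hxy
      by_cases hy' : inv y ≤ x ⊔ y
      · exact Or.inr hy'
      · left
        have hc1 : ¬ x ⊔ y ≤ inv (inv y) := by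
          rw [hinv]; exact fun h => hxy (le_sup_left.trans h)
        have hc2 : ¬ inv y ≤ inv y ⊓ (x ⊔ y) := fun h => hy' (h.trans inf_le_right)
        have hlhs : inv y ⊓ ((x ⊔ y) ⊔ inv (inv y)) ≤ inv y ⊓ (x ⊔ y) := by
          rw [hinv]; exact inf_le_inf_left _ (sup_le le_rfl le_sup_right)
        have hmp := (hD (x ⊔ y) (inv y) (inv y ⊓ (x ⊔ y)) hc1 hc2).mp hlhs
        rw [hinv] at hmp
        exact le_sup_left.trans (hmp.trans (sup_le le_sup_left (inf_le_left.trans le_sup_right)))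
  · rintro ⟨⟨hSP1, hSP2⟩, hii⟩
    have hinvtop : inv (⊤ : α) = ⊥ := by
      have h := hanti (inv ⊥) ⊤ le_top
      rw [hinv] at h
      exact le_antisymm h bot_le
    constructor
    · intro x
      constructor
      · rw [hodot, hinvtop]
        by_cases hx : x ≤ (⊥ : α)
        · rw [if_pos hx]; exact (le_bot_iff.mp hx).symm
        · rw [if_neg hx, sup_bot_eq, top_inf_eq]
      · rw [hodot]
        by_cases hx : (⊤ : α) ≤ inv x
        · rw [if_pos hx]
          have hx1 : inv x = ⊤ := le_antisymm le_top hx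
          have hx2 : x = ⊥ := by rw [← hinv x, hx1, hinvtop]
          exact hx2.symm
        · rw [if_neg hx, top_sup_eq, inf_top_eq]
    · intro x y z
      rw [hodot, harr]
      by_cases h1 : x ≤ inv y
      · rw [if_pos h1]
        by_cases h2 : y ≤ z
        · rw [if_pos h2]; exact iff_of_true bot_le le_top
        · rw [if_neg h2]; exact iff_of_true bot_le (h1.trans le_sup_left)
      · rw [if_neg h1]
        by_cases h2 : y ≤ z
        · rw [if_pos h2]; exact iff_of_true (inf_le_left.trans h2) le_top
        · rw [if_neg h2]
          constructor
          · intro hp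
            have hya : ¬ y ≤ x ⊔ inv y := fun h => h2 ((le_inf le_rfl h).trans hp)
            have he1 := s7_e1 inv hanti hinv hSP1 hSP2 hii
              (le_sup_right : inv y ≤ x ⊔ inv y)
              (fun h => h1 (le_sup_left.trans h)) hya
            refine le_sup_left.trans (he1.trans (sup_le le_sup_left ?_))
            have hz : (x ⊔ inv y) ⊓ y ≤ z := by rw [inf_comm]; exact hp
            exact (le_inf inf_le_right hz).trans le_sup_right
          · intro hr
            have hc1 : ¬ y ⊓ z ≤ inv y := fun h => h1 (hr.trans (sup_le le_rfl h))
            have hc2 : ¬ y ≤ y ⊓ z := fun h => h2 (h.trans inf_le_right)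
            have hom := s7_om inv hanti hinv hSP1 hSP2 hii
              (inf_le_left : y ⊓ z ≤ y) hc1 hc2
            have hle : y ⊓ (x ⊔ inv y) ≤ y ⊓ ((y ⊓ z) ⊔ inv y) :=
              inf_le_inf_left _
                (sup_le (hr.trans (sup_le le_sup_right le_sup_left)) le_sup_right)
            exact hle.trans (hom.trans inf_le_right)
end

section
/- Let A be a pseudo-Kleene lattice and define the Sasaki operations x ⊙ y = y ∧ (x ∨ y') and x → y = x' ∨ (x ∧ y). Then the left-residuation law (for all x, y, z: x ⊙ y ≤ z if and only if x ≤ y → z) holds if and only if A is an orthomodular lattice, i.e., x ∧ x' = 0 for all x and x ≤ y implies y = x ∨ (y ∧ x'). -/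
/-- In a pseudo-Kleene lattice with the Sasaki operations
x ⊙ y = y ∧ (x ∨ y') and x → y = x' ∨ (x ∧ y), the left-residuation law holds
iff A is an orthomodular lattice. -/
theorem stmt_8 {α : Type*} [Lattice α] [BoundedOrder α] (inv : α → α)
    (hanti : ∀ x y : α, x ≤ y → inv y ≤ inv x)
    (hinv : ∀ x : α, inv (inv x) = x)
    (hkle : ∀ x y : α, x ⊓ inv x ≤ y ⊔ inv y) :
    (∀ x y z : α, y ⊓ (x ⊔ inv y) ≤ z ↔ x ≤ inv y ⊔ (y ⊓ z)) ↔
    ((∀ x : α, x ⊓ inv x = ⊥) ∧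
     (∀ x y : α, x ≤ y → y = x ⊔ (y ⊓ inv x))) := by
  have dmorj : ∀ a b : α, inv (a ⊔ b) = inv a ⊓ inv b := by
    intro a b
    apply le_antisymm
    · exact le_inf (hanti _ _ le_sup_left) (hanti _ _ le_sup_right)
    · have h1 : a ≤ inv (inv a ⊓ inv b) := by
        have := hanti _ _ (inf_le_left (a := inv a) (b := inv b))
        rwa [hinv] at this
      have h2 : b ≤ inv (inv a ⊓ inv b) := by
        have := hanti _ _ (inf_le_right (a := inv a) (b := inv b))
        rwa [hinv] at this
      have := hanti _ _ (sup_le h1 h2)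
      rwa [hinv] at this
  have dmorm : ∀ a b : α, inv (a ⊓ b) = inv a ⊔ inv b := by
    intro a b
    have := dmorj (inv a) (inv b)
    rw [hinv, hinv] at this
    rw [← this, hinv]
  have invbot : inv (⊥ : α) = ⊤ := by
    have := hanti ⊥ (inv ⊤) bot_le
    rw [hinv] at this
    exact le_antisymm le_top this
  constructor
  · intro R
    constructor
    · intro x
      have := (R ⊥ x ⊥).mpr (by simp)
      simpa using this
    · intro x y hxy
      have h := (R y (inv x) y).mp (by
        rw [hinv]
        calc inv x ⊓ (y ⊔ x) = inv x ⊓ y := by rw [sup_eq_left.mpr hxy]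
        _ ≤ y := inf_le_right)
      rw [hinv] at h
      apply le_antisymm
      · calc y ≤ x ⊔ (inv x ⊓ y) := h
          _ = x ⊔ (y ⊓ inv x) := by rw [inf_comm]
      · exact sup_le hxy inf_le_left
  · rintro ⟨hoc, hom⟩ x y z
    constructor
    · intro h
      have h1 : x ⊔ inv y = inv y ⊔ ((x ⊔ inv y) ⊓ y) := by
        have := hom (inv y) (x ⊔ inv y) le_sup_right
        rwa [hinv] at this
      calc x ≤ x ⊔ inv y := le_sup_left
        _ = inv y ⊔ ((x ⊔ inv y) ⊓ y) := h1
        _ = inv y ⊔ (y ⊓ (x ⊔ inv y)) := by rw [inf_comm]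
        _ ≤ inv y ⊔ (y ⊓ z) := sup_le_sup_left (le_inf inf_le_left h) _
    · intro h
      -- key: a ≤ y → y ⊓ (inv y ⊔ a) ≤ a
      have key : ∀ a : α, a ≤ y → y ⊓ (inv y ⊔ a) ≤ a := by
        intro a hay
        have h2 : inv a = inv y ⊔ (inv a ⊓ y) := by
          have := hom (inv y) (inv a) (hanti _ _ hay)
          rwa [hinv] at this
        have h3 : a = y ⊓ (a ⊔ inv y) := by
          have := congrArg inv h2
          rwa [hinv, dmorj, hinv, dmorm, hinv] at this
        rw [sup_comm]
        exact h3.ge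
      calc y ⊓ (x ⊔ inv y) ≤ y ⊓ (inv y ⊔ (y ⊓ z)) := by
            apply inf_le_inf_left
            exact sup_le h le_sup_left
        _ ≤ y ⊓ z := key _ inf_le_left
        _ ≤ z := inf_le_right
end

section
/- Let A be an orthomodular lattice and let A^[2] = {(a, b) ∈ A × A : a ≤ b} with componentwise meet and join, involution ∼(a, b) = (b', a'), bottom (0, 0) and top (1, 1). Then A^[2] is an sp-orthomodular lattice: ∼ is an antitone involution, the Kleene condition p ∧ ∼p ≤ q ∨ ∼q holds for all p, q in A^[2], and the (sp) condition holds: p ≤ q implies q ∧ (p ∨ ∼p) = p ∨ (∼p ∧ q). -/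
/-- If A is an orthomodular lattice, then A^[2] = {(a,b) : a ≤ b}
with componentwise operations and involution ∼(a,b) = (b',a') is an
sp-orthomodular lattice: ∼ is an antitone involution, the Kleene condition
holds, and the (sp) condition holds. -/
theorem stmt_9 {α : Type*} [Lattice α] [BoundedOrder α] (inv : α → α)
    (hanti : ∀ x y : α, x ≤ y → inv y ≤ inv x)
    (hinv : ∀ x : α, inv (inv x) = x)
    (hcompl : ∀ x : α, x ⊓ inv x = ⊥)
    (hom : ∀ x y : α, x ≤ y → y = x ⊔ (y ⊓ inv x))
    (sInv : α × α → α × α)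
    (hsInv : ∀ p : α × α, sInv p = (inv p.2, inv p.1)) :
    (∀ p q : α × α, p.1 ≤ p.2 → q.1 ≤ q.2 → p ≤ q → sInv q ≤ sInv p) ∧
    (∀ p : α × α, p.1 ≤ p.2 → sInv (sInv p) = p) ∧
    (∀ p : α × α, p.1 ≤ p.2 → (sInv p).1 ≤ (sInv p).2) ∧
    (∀ p q : α × α, p.1 ≤ p.2 → q.1 ≤ q.2 → p ⊓ sInv p ≤ q ⊔ sInv q) ∧
    (∀ p q : α × α, p.1 ≤ p.2 → q.1 ≤ q.2 → p ≤ q →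
        q ⊓ (p ⊔ sInv p) = p ⊔ (sInv p ⊓ q)) := by
  -- De Morgan laws
  have dm1 : ∀ x y : α, inv (x ⊔ y) = inv x ⊓ inv y := by
    intro x y
    apply le_antisymm
    · exact le_inf (hanti _ _ le_sup_left) (hanti _ _ le_sup_right)
    · have h1 : x ≤ inv (inv x ⊓ inv y) := by
        conv_lhs => rw [← hinv x]
        exact hanti _ _ inf_le_left
      have h2 : y ≤ inv (inv x ⊓ inv y) := by
        conv_lhs => rw [← hinv y]
        exact hanti _ _ inf_le_right
      have h3 := hanti _ _ (sup_le h1 h2)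
      rwa [hinv] at h3
  have dm2 : ∀ x y : α, inv (x ⊓ y) = inv x ⊔ inv y := by
    intro x y
    have h := dm1 (inv x) (inv y)
    rw [hinv, hinv] at h
    rw [← h, hinv]
  -- x ⊔ inv x = ⊤
  have htop : ∀ x : α, x ⊔ inv x = ⊤ := by
    intro x
    have h := hom x ⊤ le_top
    rw [top_inf_eq] at h
    exact h.symm
  -- key distributivity-type identity
  have key : ∀ a b c : α, a ≤ b → a ≤ c →
      c ⊓ (a ⊔ inv b) = a ⊔ (inv b ⊓ c) := by
    intro a b c hab hac
    have t_eq : (a ⊔ inv b) ⊓ inv a = inv b := by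
      have h1 : inv ((a ⊔ inv b) ⊓ inv a) = b := by
        rw [dm2, dm1, hinv, hinv, sup_comm, inf_comm]
        exact (hom a b hab).symm
      have h2 := congrArg inv h1
      rwa [hinv] at h2
    set d := a ⊔ (inv b ⊓ c) with hd
    have hde : d ≤ c ⊓ (a ⊔ inv b) :=
      sup_le (le_inf hac le_sup_left) (le_inf inf_le_right (le_sup_of_le_right inf_le_left))
    have hdinv : inv d = inv a ⊓ inv (inv b ⊓ c) := dm1 _ _
    have hbot : (c ⊓ (a ⊔ inv b)) ⊓ inv d = ⊥ := by
      have hle : (c ⊓ (a ⊔ inv b)) ⊓ inv d ≤ (inv b ⊓ c) ⊓ inv (inv b ⊓ c) := by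
        rw [hdinv]
        refine le_inf (le_inf ?_ ?_) ?_
        · calc (c ⊓ (a ⊔ inv b)) ⊓ (inv a ⊓ inv (inv b ⊓ c))
              ≤ (a ⊔ inv b) ⊓ inv a :=
                inf_le_inf (inf_le_right) (inf_le_left)
            _ = inv b := t_eq
        · exact le_trans inf_le_left inf_le_left
        · exact le_trans inf_le_right inf_le_right
      rw [hcompl] at hle
      exact le_bot_iff.mp hle
    have h := hom d (c ⊓ (a ⊔ inv b)) hde
    rw [hbot, sup_bot_eq] at h
    exact h
  refine ⟨?_, ?_, ?_, ?_, ?_⟩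
  · intro p q _ _ hpq
    rw [hsInv, hsInv]
    exact ⟨hanti _ _ hpq.2, hanti _ _ hpq.1⟩
  · intro p _
    rw [hsInv, hsInv]
    simp [hinv]
  · intro p hp
    rw [hsInv]
    exact hanti _ _ hp
  · intro p q hp hq
    rw [hsInv, hsInv]
    constructor
    · have h1 : (p ⊓ (inv p.2, inv p.1)).1 ≤ p.2 ⊓ inv p.2 :=
        inf_le_inf hp le_rfl
      rw [hcompl] at h1
      exact le_trans h1 bot_le
    · have h2 : (⊤ : α) ≤ (q ⊔ (inv q.2, inv q.1)).2 := by
        rw [← htop q.1]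
        exact sup_le_sup hq le_rfl
      exact le_trans le_top h2
  · intro p q hp hq hpq
    rw [hsInv]
    have hfst : (q ⊓ (p ⊔ (inv p.2, inv p.1))).1 = (p ⊔ ((inv p.2, inv p.1) ⊓ q)).1 :=
      key p.1 p.2 q.1 hp hpq.1
    have hsnd : (q ⊓ (p ⊔ (inv p.2, inv p.1))).2 = (p ⊔ ((inv p.2, inv p.1) ⊓ q)).2 := by
      show q.2 ⊓ (p.2 ⊔ inv p.1) = p.2 ⊔ (inv p.1 ⊓ q.2)
      have h1 : p.2 ⊔ inv p.1 = ⊤ := by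
        apply le_antisymm le_top
        rw [← htop p.1]
        exact sup_le_sup hp le_rfl
      rw [h1, inf_top_eq]
      apply le_antisymm
      · have h2 := hom p.2 q.2 hpq.2
        calc q.2 = p.2 ⊔ (q.2 ⊓ inv p.2) := h2
          _ ≤ p.2 ⊔ (inv p.1 ⊓ q.2) := by
              apply sup_le_sup le_rfl
              rw [inf_comm]
              exact inf_le_inf (hanti _ _ hp) le_rfl
      · exact sup_le hpq.2 inf_le_right
    exact Prod.ext hfst hsnd
end

section
/- In an sp-orthomodular lattice A, the sharp elements form a sub-orthomodular poset: 0 and 1 are sharp; if x is sharp then x' is sharp; if x, y are sharp and x ≤ y' then x ∨ y is sharp (i.e., (x ∨ y) ∧ (x ∨ y)' = 0); and for sharp x, y with x ≤ y, the orthomodular law y = x ∨ (y ∧ x') holds. -/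
/-- In an sp-orthomodular lattice the sharp elements form a
sub-orthomodular poset. -/
theorem stmt_11 {α : Type*} [Lattice α] [BoundedOrder α] (inv : α → α)
    (hanti : ∀ x y : α, x ≤ y → inv y ≤ inv x)
    (hinv : ∀ x : α, inv (inv x) = x)
    (hkle : ∀ x y : α, x ⊓ inv x ≤ y ⊔ inv y)
    (hsp1 : ∀ x y : α, x ≤ y → inv x ⊓ y = (x ⊓ inv x) ⊔ (y ⊓ inv y) →
        y ⊓ (x ⊔ inv x) = x ⊔ (y ⊓ inv y))
    (hsp2 : ∀ x y : α, x ≤ y →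
        (x ⊓ inv x) ⊔ (y ⊓ inv y) = (inv x ⊓ y) ⊓ inv (inv x ⊓ y)) :
    (⊥ : α) ⊓ inv ⊥ = ⊥ ∧
    (⊤ : α) ⊓ inv ⊤ = ⊥ ∧
    (∀ x : α, x ⊓ inv x = ⊥ → inv x ⊓ inv (inv x) = ⊥) ∧
    (∀ x y : α, x ⊓ inv x = ⊥ → y ⊓ inv y = ⊥ → x ≤ inv y →
        (x ⊔ y) ⊓ inv (x ⊔ y) = ⊥) ∧
    (∀ x y : α, x ⊓ inv x = ⊥ → y ⊓ inv y = ⊥ → x ≤ y →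
        y = x ⊔ (y ⊓ inv x)) := by
  have hinvtop : inv ⊤ = ⊥ := by
    have h := hanti (inv ⊥) ⊤ le_top
    rw [hinv] at h
    exact le_bot_iff.mp h
  have hinvbot : inv ⊥ = ⊤ := by
    rw [← hinvtop, hinv]
  -- De Morgan law for ⊔
  have dm : ∀ x y : α, inv (x ⊔ y) = inv x ⊓ inv y := by
    intro x y
    apply le_antisymm
    · exact le_inf (hanti x _ le_sup_left) (hanti y _ le_sup_right)
    · have h1 : x ≤ inv (inv x ⊓ inv y) := by
        have h := hanti (inv x ⊓ inv y) (inv x) inf_le_left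
        rwa [hinv] at h
      have h2 : y ≤ inv (inv x ⊓ inv y) := by
        have h := hanti (inv x ⊓ inv y) (inv y) inf_le_right
        rwa [hinv] at h
      have h := hanti (x ⊔ y) (inv (inv x ⊓ inv y)) (sup_le h1 h2)
      rwa [hinv] at h
  -- paraorthomodularity
  have para : ∀ x y : α, x ≤ y → inv x ⊓ y = ⊥ → y = x := by
    intro x y hxy h
    have hxs : x ⊓ inv x = ⊥ := by
      apply le_bot_iff.mp
      rw [← h]
      exact le_inf inf_le_right (le_trans inf_le_left hxy)
    have hys : y ⊓ inv y = ⊥ := by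
      apply le_bot_iff.mp
      rw [← h]
      exact le_inf (le_trans inf_le_right (hanti x y hxy)) inf_le_left
    have htop : x ⊔ inv y = ⊤ := by
      have hdm : inv (x ⊔ inv y) = ⊥ := by
        rw [dm, hinv]; exact h
      have := hinv (x ⊔ inv y)
      rw [hdm, hinvbot] at this
      exact this.symm
    have hxx : x ⊔ inv x = ⊤ := by
      apply top_le_iff.mp
      rw [← htop]
      exact sup_le le_sup_left (le_trans (hanti x y hxy) le_sup_right)
    have hcon := hsp1 x y hxy (by rw [h, hxs, hys, sup_idem])
    rw [hxx, inf_top_eq, hys, sup_bot_eq] at hcon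
    exact hcon
  refine ⟨by simp, by rw [hinvtop]; simp, ?_, ?_, ?_⟩
  · intro x hx
    rw [hinv, inf_comm]
    exact hx
  · intro x y hx hy hxy
    have h := hsp2 x (inv y) hxy
    rw [hx, hinv] at h
    rw [inf_comm (inv y) y] at h
    rw [hy, sup_idem, ← dm, hinv] at h
    rw [inf_comm]
    exact h.symm
  · intro x y hx hy hxy
    -- z = inv x ⊓ y is sharp by SP2
    have hz : (inv x ⊓ y) ⊓ inv (inv x ⊓ y) = ⊥ := by
      have h := hsp2 x y hxy
      rw [hx, hy, sup_idem] at h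
      exact h.symm
    set w := x ⊔ (y ⊓ inv x) with hw
    have hwy : w ≤ y := sup_le hxy inf_le_left
    have hkey : inv w ⊓ y = ⊥ := by
      have : inv w ⊓ y = (inv x ⊓ y) ⊓ inv (inv x ⊓ y) := by
        rw [hw, dm, inf_comm y (inv x)]
        ac_rfl
      rw [this, hz]
    exact para w y hwy hkey
end

section
/- A pseudo-Kleene lattice A satisfies (SP2) if and only if for all x, y in A with x ≤ y the following hold in the localizer Local(x, y): (1) the elements x ∨ (y ∧ y') and y ∧ (x ∨ x') are sharp in Local(x, y), i.e., (x ∨ (y ∧ y')) ∧ (x ∨ (y ∧ y'))' = 0_{x,y} and (y ∧ (x ∨ x')) ∧ (y ∧ (x ∨ x'))' = 0_{x,y}; and (2) the sharp elements of Local(x, y) form an orthogonal poset: for all z, u in [0_{x,y}, 1_{x,y}] with z ∧ z' = 0_{x,y} = u ∧ u' and z ≤ u', one has (z ∨ u) ∧ (z ∨ u)' = 0_{x,y}. -/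
set_option linter.unusedSectionVars false

section Aux

variable {α : Type*} [Lattice α] [BoundedOrder α] (inv : α → α)

private lemma aux_dm (hanti : ∀ x y : α, x ≤ y → inv y ≤ inv x)
    (hinv : ∀ x : α, inv (inv x) = x) (a b : α) :
    inv (a ⊔ b) = inv a ⊓ inv b := by
  apply le_antisymm
  · exact le_inf (hanti _ _ le_sup_left) (hanti _ _ le_sup_right)
  · have h1 : a ≤ inv (inv a ⊓ inv b) := by
      have := hanti _ _ (inf_le_left : inv a ⊓ inv b ≤ inv a)
      rwa [hinv] at this
    have h2 : b ≤ inv (inv a ⊓ inv b) := by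
      have := hanti _ _ (inf_le_right : inv a ⊓ inv b ≤ inv b)
      rwa [hinv] at this
    have := hanti _ _ (sup_le h1 h2)
    rwa [hinv] at this

private lemma aux_dm' (hanti : ∀ x y : α, x ≤ y → inv y ≤ inv x)
    (hinv : ∀ x : α, inv (inv x) = x) (a b : α) :
    inv (a ⊓ b) = inv a ⊔ inv b := by
  have h := aux_dm inv hanti hinv (inv a) (inv b)
  rw [hinv, hinv] at h
  rw [← h, hinv]

/-- sharpness of x ⊔ (y ⊓ y') in the localizer, from the SP2 instance at (x,y). -/
private lemma aux_sharp (hanti : ∀ x y : α, x ≤ y → inv y ≤ inv x)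
    (hinv : ∀ x : α, inv (inv x) = x)
    (hkle : ∀ x y : α, x ⊓ inv x ≤ y ⊔ inv y)
    (x y : α) (hxy : x ≤ y)
    (hsp : (x ⊓ inv x) ⊔ (y ⊓ inv y) = (inv x ⊓ y) ⊓ inv (inv x ⊓ y)) :
    (x ⊔ (y ⊓ inv y)) ⊓ inv (x ⊔ (y ⊓ inv y)) = (x ⊓ inv x) ⊔ (y ⊓ inv y) := by
  have hia : inv (x ⊔ (y ⊓ inv y)) = inv x ⊓ (inv y ⊔ y) := by
    rw [aux_dm inv hanti hinv, aux_dm' inv hanti hinv, hinv]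
  rw [hia]
  apply le_antisymm
  · -- LHS ≤ (inv x ⊓ y) ⊓ inv (inv x ⊓ y) = RHS
    rw [hsp]
    have hiy : inv (inv x ⊓ y) = x ⊔ inv y := by
      rw [aux_dm' inv hanti hinv, hinv]
    rw [hiy]
    apply le_inf
    · exact le_inf (le_trans inf_le_right inf_le_left)
        (le_trans inf_le_left (sup_le hxy inf_le_left))
    · exact le_trans inf_le_left (sup_le le_sup_left (le_trans inf_le_right le_sup_right))
  · apply le_inf
    · exact sup_le (le_trans inf_le_left le_sup_left) le_sup_right
    · apply le_inf
      · exact sup_le inf_le_right (le_trans inf_le_right (hanti x y hxy))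
      · refine sup_le ?_ (le_trans inf_le_left le_sup_right)
        have h := hkle x y
        rwa [sup_comm] at h

end Aux

/-- A pseudo-Kleene lattice satisfies (SP2) iff for all x ≤ y:
(1) x ∨ (y ∧ y') and y ∧ (x ∨ x') are sharp in the localizer Local(x,y), and
(2) the sharp elements of Local(x,y) form an orthogonal poset. -/
theorem stmt_12 {α : Type*} [Lattice α] [BoundedOrder α] (inv : α → α)
    (hanti : ∀ x y : α, x ≤ y → inv y ≤ inv x)
    (hinv : ∀ x : α, inv (inv x) = x)
    (hkle : ∀ x y : α, x ⊓ inv x ≤ y ⊔ inv y) :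
    (∀ x y : α, x ≤ y →
        (x ⊓ inv x) ⊔ (y ⊓ inv y) = (inv x ⊓ y) ⊓ inv (inv x ⊓ y)) ↔
    (∀ x y : α, x ≤ y →
      ((x ⊔ (y ⊓ inv y)) ⊓ inv (x ⊔ (y ⊓ inv y)) = (x ⊓ inv x) ⊔ (y ⊓ inv y)) ∧
      ((y ⊓ (x ⊔ inv x)) ⊓ inv (y ⊓ (x ⊔ inv x)) = (x ⊓ inv x) ⊔ (y ⊓ inv y)) ∧
      (∀ z u : α,
        (x ⊓ inv x) ⊔ (y ⊓ inv y) ≤ z → z ≤ (x ⊔ inv x) ⊓ (y ⊔ inv y) →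
        (x ⊓ inv x) ⊔ (y ⊓ inv y) ≤ u → u ≤ (x ⊔ inv x) ⊓ (y ⊔ inv y) →
        z ⊓ inv z = (x ⊓ inv x) ⊔ (y ⊓ inv y) →
        u ⊓ inv u = (x ⊓ inv x) ⊔ (y ⊓ inv y) →
        z ≤ inv u →
        (z ⊔ u) ⊓ inv (z ⊔ u) = (x ⊓ inv x) ⊔ (y ⊓ inv y))) := by
  have dm := aux_dm inv hanti hinv
  have dm' := aux_dm' inv hanti hinv
  constructor
  · intro hsp2 x y hxy
    refine ⟨aux_sharp inv hanti hinv hkle x y hxy (hsp2 x y hxy), ?_, ?_⟩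
    · -- (1b): apply aux_sharp to the pair (inv y, inv x)
      have h2 := aux_sharp inv hanti hinv hkle (inv y) (inv x) (hanti x y hxy)
        (hsp2 (inv y) (inv x) (hanti x y hxy))
      rw [hinv, hinv] at h2
      -- h2 : (inv y ⊔ (inv x ⊓ x)) ⊓ inv (inv y ⊔ (inv x ⊓ x)) = (inv y ⊓ y) ⊔ (inv x ⊓ x)
      have hib : inv (y ⊓ (x ⊔ inv x)) = inv y ⊔ (inv x ⊓ x) := by
        rw [dm', dm, hinv]
      rw [hib]
      have hba : y ⊓ (x ⊔ inv x) = inv (inv y ⊔ (inv x ⊓ x)) := by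
        rw [dm, dm', hinv, hinv]
      rw [hba, inf_comm, h2, sup_comm, inf_comm (inv x) x, inf_comm (inv y) y]
    · -- (2): orthogonality of sharp elements
      intro z u _ _ _ _ hz hu hzu
      have hs := hsp2 z (inv u) hzu
      rw [hinv] at hs
      -- hs : (z ⊓ inv z) ⊔ (inv u ⊓ u) = (inv z ⊓ inv u) ⊓ inv (inv z ⊓ inv u)
      rw [hz, inf_comm (inv u) u, hu, sup_idem] at hs
      have h1 : inv z ⊓ inv u = inv (z ⊔ u) := (dm z u).symm
      have h2 : inv (inv z ⊓ inv u) = z ⊔ u := by rw [dm', hinv, hinv]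
      rw [h2, h1, inf_comm (inv (z ⊔ u)) (z ⊔ u)] at hs
      exact hs.symm
  · intro h x y hxy
    obtain ⟨ha, hb, horth⟩ := h x y hxy
    -- notation: a = x ⊔ (y ⊓ y'), b = y ⊓ (x ⊔ x'), O = (x ⊓ x') ⊔ (y ⊓ y')
    have hyx' : inv y ≤ inv x := hanti x y hxy
    have hk : x ⊓ inv x ≤ inv y ⊔ y := by have h := hkle x y; rwa [sup_comm] at h
    have hk' : y ⊓ inv y ≤ x ⊔ inv x := hkle y x
    have hOa : (x ⊓ inv x) ⊔ (y ⊓ inv y) ≤ x ⊔ (y ⊓ inv y) :=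
      sup_le (inf_le_left.trans le_sup_left) le_sup_right
    have ha1 : x ⊔ (y ⊓ inv y) ≤ (x ⊔ inv x) ⊓ (y ⊔ inv y) :=
      le_inf (sup_le le_sup_left hk')
        (sup_le (hxy.trans le_sup_left) (inf_le_left.trans le_sup_left))
    have hib : inv (y ⊓ (x ⊔ inv x)) = inv y ⊔ (inv x ⊓ x) := by
      rw [dm', dm, hinv]
    have hOb' : (x ⊓ inv x) ⊔ (y ⊓ inv y) ≤ inv (y ⊓ (x ⊔ inv x)) := by
      rw [hib]
      exact sup_le ((inf_comm x (inv x)).le.trans le_sup_right)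
        (inf_le_right.trans le_sup_left)
    have hb1 : inv (y ⊓ (x ⊔ inv x)) ≤ (x ⊔ inv x) ⊓ (y ⊔ inv y) := by
      rw [hib]
      refine le_inf (sup_le (hyx'.trans le_sup_right) (inf_le_left.trans le_sup_right)) ?_
      refine sup_le le_sup_right ?_
      have h := hkle x y
      exact (inf_comm (inv x) x).le.trans h
    have hbb : inv (y ⊓ (x ⊔ inv x)) ⊓ inv (inv (y ⊓ (x ⊔ inv x)))
        = (x ⊓ inv x) ⊔ (y ⊓ inv y) := by
      rw [hinv, inf_comm]
      exact hb
    have hab : x ⊔ (y ⊓ inv y) ≤ inv (inv (y ⊓ (x ⊔ inv x))) := by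
      rw [hinv]
      exact le_inf (sup_le hxy inf_le_left) (sup_le le_sup_left hk')
    have key := horth (x ⊔ (y ⊓ inv y)) (inv (y ⊓ (x ⊔ inv x)))
      hOa ha1 hOb' hb1 ha hbb hab
    -- simplify the join: x ⊔ (y ⊓ y') ⊔ (y' ⊔ (x' ⊓ x)) = x ⊔ y'
    have hj : (x ⊔ (y ⊓ inv y)) ⊔ inv (y ⊓ (x ⊔ inv x)) = x ⊔ inv y := by
      rw [hib]
      apply le_antisymm
      · exact sup_le (sup_le le_sup_left (inf_le_right.trans le_sup_right))
          (sup_le le_sup_right (inf_le_right.trans le_sup_left))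
      · exact sup_le (le_sup_left.trans le_sup_left) (le_sup_left.trans le_sup_right)
    rw [hj] at key
    have h1 : inv (x ⊔ inv y) = inv x ⊓ y := by rw [dm, hinv]
    have h2 : inv (inv x ⊓ y) = x ⊔ inv y := by rw [dm', hinv]
    rw [h1] at key
    rw [h2, ← key, inf_comm]
end

section
/- Let A be an sp-orthomodular lattice and let x, y be sharp elements of A. If x commutes with y in Sh(A) — i.e., there exist sharp elements c and d such that c is the greatest sharp lower bound of {x, y}, d is the greatest sharp lower bound of {x, y'}, and x = c ∨ d — then c equals the meet x ∧ y computed in A. -/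
/-- In an sp-orthomodular lattice, if sharp elements x, y commute in
Sh(A) (with witnesses c, d), then c equals x ∧ y computed in A. -/
theorem stmt_14 {α : Type*} [Lattice α] [BoundedOrder α] (inv : α → α)
    (hanti : ∀ x y : α, x ≤ y → inv y ≤ inv x)
    (hinv : ∀ x : α, inv (inv x) = x)
    (hkle : ∀ x y : α, x ⊓ inv x ≤ y ⊔ inv y)
    (hsp1 : ∀ x y : α, x ≤ y → inv x ⊓ y = (x ⊓ inv x) ⊔ (y ⊓ inv y) →
        y ⊓ (x ⊔ inv x) = x ⊔ (y ⊓ inv y))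
    (hsp2 : ∀ x y : α, x ≤ y →
        (x ⊓ inv x) ⊔ (y ⊓ inv y) = (inv x ⊓ y) ⊓ inv (inv x ⊓ y))
    (x y c d : α)
    (hx : x ⊓ inv x = ⊥) (hy : y ⊓ inv y = ⊥)
    (hc : c ⊓ inv c = ⊥) (hd : d ⊓ inv d = ⊥)
    (hcx : c ≤ x) (hcy : c ≤ y)
    (hcgreatest : ∀ e : α, e ⊓ inv e = ⊥ → e ≤ x → e ≤ y → e ≤ c)
    (hdx : d ≤ x) (hdy' : d ≤ inv y)
    (hdgreatest : ∀ e : α, e ⊓ inv e = ⊥ → e ≤ x → e ≤ inv y → e ≤ d)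
    (hxcd : x = c ⊔ d) :
    c = x ⊓ y := by
  -- de Morgan: inv c ⊓ inv d = inv (c ⊔ d) = inv x
  have hdm : inv c ⊓ inv d = inv x := by
    apply le_antisymm
    · have h1 : c ≤ inv (inv c ⊓ inv d) := by
        have := hanti (inv c ⊓ inv d) (inv c) inf_le_left
        rwa [hinv] at this
      have h2 : d ≤ inv (inv c ⊓ inv d) := by
        have := hanti (inv c ⊓ inv d) (inv d) inf_le_right
        rwa [hinv] at this
      have h3 : x ≤ inv (inv c ⊓ inv d) := by rw [hxcd]; exact sup_le h1 h2
      have := hanti x (inv (inv c ⊓ inv d)) h3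
      rwa [hinv] at this
    · exact le_inf (hanti c x hcx) (hanti d x (by rw [hxcd]; exact le_sup_right))
  -- d ≤ inv c
  have hdc' : d ≤ inv c := le_trans hdy' (hanti c y hcy)
  -- r := inv c ⊓ x
  set r := inv c ⊓ x with hr
  -- r is sharp, by SP2 applied to c ≤ x
  have hrsharp : r ⊓ inv r = ⊥ := by
    have := hsp2 c x hcx
    rw [hc, hx, bot_sup_eq] at this
    exact this.symm
  -- d ≤ r
  have hdr : d ≤ r := le_inf hdc' hdx
  -- inv d ⊓ r = ⊥
  have hdr0 : inv d ⊓ r = ⊥ := by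
    have : inv d ⊓ r = (inv c ⊓ inv d) ⊓ x := by
      rw [hr]; rw [← inf_assoc, inf_comm (inv d) (inv c)]
    rw [this, hdm]
    rw [inf_comm] at hx
    exact hx
  -- SP1 on (d, r): r ⊓ (d ⊔ inv d) = d
  have key : r ⊓ (d ⊔ inv d) = d := by
    have := hsp1 d r hdr (by rw [hdr0, hd, hrsharp, bot_sup_eq])
    rwa [hrsharp, sup_bot_eq] at this
  -- t := x ⊓ y, m := t ⊓ inv t
  set t := x ⊓ y with ht
  have hct : c ≤ t := le_inf hcx hcy
  have hm_le_r : t ⊓ inv t ≤ r :=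
    le_inf (le_trans inf_le_right (hanti c t hct)) (le_trans inf_le_left inf_le_left)
  have hm_le_d : t ⊓ inv t ≤ d := by
    rw [← key]
    exact le_inf hm_le_r (hkle t d)
  -- m ≤ y ⊓ inv y = ⊥
  have hm : t ⊓ inv t = ⊥ := by
    have h1 : t ⊓ inv t ≤ y := le_trans inf_le_left inf_le_right
    have h2 : t ⊓ inv t ≤ inv y := le_trans hm_le_d hdy'
    have := le_inf h1 h2
    rw [hy] at this
    exact le_bot_iff.mp this
  -- t is sharp, so t ≤ c
  have htc : t ≤ c := hcgreatest t hm inf_le_left inf_le_right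
  exact le_antisymm hct htc
end

section
/- Let A be an sp-orthomodular lattice and let x, y be sharp elements of A. Then there exists a distributive subalgebra of A containing x and y if and only if x commutes with y in Sh(A), i.e., there exist sharp elements c and d such that c is the greatest sharp lower bound of {x, y}, d is the greatest sharp lower bound of {x, y'}, and x = c ∨ d; moreover, in this case there is a distributive subalgebra of A containing x and y all of whose elements are sharp (a Boolean subalgebra). -/
namespace Stmt15Aux

variable {α : Type*} [Lattice α] [BoundedOrder α]

lemma le_inv_swap (inv : α → α) (hanti : ∀ x y : α, x ≤ y → inv y ≤ inv x)
    (hinv : ∀ x : α, inv (inv x) = x) {a b : α} (h : a ≤ inv b) : b ≤ inv a := by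
  calc b = inv (inv b) := (hinv b).symm
    _ ≤ inv a := hanti _ _ h

lemma dm_sup (inv : α → α) (hanti : ∀ x y : α, x ≤ y → inv y ≤ inv x)
    (hinv : ∀ x : α, inv (inv x) = x) (a b : α) :
    inv (a ⊔ b) = inv a ⊓ inv b := by
  refine le_antisymm (le_inf (hanti _ _ le_sup_left) (hanti _ _ le_sup_right)) ?_
  refine le_inv_swap inv hanti hinv ?_
  exact sup_le (le_inv_swap inv hanti hinv inf_le_left)
    (le_inv_swap inv hanti hinv inf_le_right)

lemma dm_inf (inv : α → α) (hanti : ∀ x y : α, x ≤ y → inv y ≤ inv x)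
    (hinv : ∀ x : α, inv (inv x) = x) (a b : α) :
    inv (a ⊓ b) = inv a ⊔ inv b := by
  have h := dm_sup inv hanti hinv (inv a) (inv b)
  rw [hinv, hinv] at h
  rw [← h, hinv]

lemma inv_top (inv : α → α) (hanti : ∀ x y : α, x ≤ y → inv y ≤ inv x)
    (hinv : ∀ x : α, inv (inv x) = x) : inv (⊤ : α) = ⊥ := by
  have := hanti (inv ⊥) ⊤ le_top
  rw [hinv] at this
  exact le_bot_iff.mp this

lemma inv_bot (inv : α → α) (hanti : ∀ x y : α, x ≤ y → inv y ≤ inv x)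
    (hinv : ∀ x : α, inv (inv x) = x) : inv (⊥ : α) = ⊤ := by
  have := le_inv_swap inv hanti hinv (bot_le : (⊥:α) ≤ inv ⊤)
  exact top_le_iff.mp this

lemma inv_injective (inv : α → α) (hinv : ∀ x : α, inv (inv x) = x) {a b : α}
    (h : inv a = inv b) : a = b := by
  have := congrArg inv h
  rwa [hinv, hinv] at this

lemma sharp_sup (inv : α → α) (hanti : ∀ x y : α, x ≤ y → inv y ≤ inv x)
    (hinv : ∀ x : α, inv (inv x) = x) {a : α} (h : a ⊓ inv a = ⊥) :
    a ⊔ inv a = ⊤ := by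
  apply inv_injective inv hinv
  rw [dm_sup inv hanti hinv, hinv, inv_top inv hanti hinv, inf_comm, h]

/-- Key orthomodularity-style lemma (from SP1). -/
lemma sharp_le_eq (inv : α → α) (hanti : ∀ x y : α, x ≤ y → inv y ≤ inv x)
    (hinv : ∀ x : α, inv (inv x) = x)
    (hsp1 : ∀ x y : α, x ≤ y → inv x ⊓ y = (x ⊓ inv x) ⊔ (y ⊓ inv y) →
        y ⊓ (x ⊔ inv x) = x ⊔ (y ⊓ inv y))
    {a b : α} (ha : a ⊓ inv a = ⊥) (hab : a ≤ b) (h : inv a ⊓ b = ⊥) : a = b := by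
  have hb : b ⊓ inv b = ⊥ := by
    have h1 : b ⊓ inv b ≤ inv a ⊓ b :=
      le_inf (le_trans inf_le_right (hanti _ _ hab)) inf_le_left
    rw [h] at h1
    exact le_bot_iff.mp h1
  have h1 := hsp1 a b hab (by rw [ha, hb, h, bot_sup_eq])
  rw [sharp_sup inv hanti hinv ha, hb, inf_top_eq, sup_bot_eq] at h1
  exact h1.symm

/-- From `q ≤ p'` and `p ⊔ q = ⊤` deduce `p' = q`. -/
lemma inv_eq_of (inv : α → α) (hanti : ∀ x y : α, x ≤ y → inv y ≤ inv x)
    (hinv : ∀ x : α, inv (inv x) = x)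
    (hsp1 : ∀ x y : α, x ≤ y → inv x ⊓ y = (x ⊓ inv x) ⊔ (y ⊓ inv y) →
        y ⊓ (x ⊔ inv x) = x ⊔ (y ⊓ inv y))
    {p q : α} (hq : q ≤ inv p) (htop : p ⊔ q = ⊤) : inv p = q := by
  have hpq : inv p ⊓ inv q = ⊥ := by
    rw [← dm_sup inv hanti hinv, htop, inv_top inv hanti hinv]
  have ha : q ⊓ inv q = ⊥ := by
    have : q ⊓ inv q ≤ inv p ⊓ inv q := le_inf (le_trans inf_le_left hq) inf_le_right
    rw [hpq] at this
    exact le_bot_iff.mp this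
  exact (sharp_le_eq inv hanti hinv hsp1 ha hq (by rw [inf_comm, hpq])).symm

section FinsetPart

variable (inv : α → α) (hanti : ∀ x y : α, x ≤ y → inv y ≤ inv x)
    (hinv : ∀ x : α, inv (inv x) = x)
    (hsp1 : ∀ x y : α, x ≤ y → inv x ⊓ y = (x ⊓ inv x) ⊔ (y ⊓ inv y) →
        y ⊓ (x ⊔ inv x) = x ⊔ (y ⊓ inv y))
    (p : Fin 4 → α)
    (hpair : ∀ i j : Fin 4, i ≠ j → p i ≤ inv (p j))
    (htop : Finset.univ.sup p = ⊤)

include hanti hinv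

lemma compl_le (I : Finset (Fin 4)) (hpair : ∀ i j : Fin 4, i ≠ j → p i ≤ inv (p j)) :
    Iᶜ.sup p ≤ inv (I.sup p) := by
  refine Finset.sup_le fun j hj => le_inv_swap inv hanti hinv ?_
  refine Finset.sup_le fun i hi => hpair i j fun hij => ?_
  exact (Finset.mem_compl.mp hj) (hij ▸ hi)

omit hanti hinv in
include htop in
lemma sup_compl (I : Finset (Fin 4)) : I.sup p ⊔ Iᶜ.sup p = ⊤ := by
  rw [← Finset.sup_union, Finset.union_compl, htop]

include hsp1 hpair htop in
lemma inv_sup_eq (I : Finset (Fin 4)) : inv (I.sup p) = Iᶜ.sup p :=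
  inv_eq_of inv hanti hinv hsp1 (compl_le inv hanti hinv p I hpair)
    (sup_compl p htop I)

include hsp1 hpair htop in
lemma sharp_usup (I : Finset (Fin 4)) : I.sup p ⊓ inv (I.sup p) = ⊥ := by
  apply inv_injective inv hinv
  rw [inv_bot inv hanti hinv, dm_inf inv hanti hinv, hinv,
    inv_sup_eq inv hanti hinv hsp1 p hpair htop, sup_comm]
  exact sup_compl p htop I

include hsp1 hpair htop in
lemma meet_usup (I J : Finset (Fin 4)) :
    I.sup p ⊓ J.sup p = (I ∩ J).sup p := by
  have hIeq := inv_sup_eq inv hanti hinv hsp1 p hpair htop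
  have hinvb : inv (I.sup p ⊓ J.sup p) = ((I ∩ J)ᶜ).sup p := by
    rw [dm_inf inv hanti hinv, hIeq I, hIeq J, ← Finset.sup_union,
      ← Finset.compl_inter]
  have hKle : (I ∩ J).sup p ≤ I.sup p ⊓ J.sup p :=
    le_inf (Finset.sup_mono Finset.inter_subset_left)
      (Finset.sup_mono Finset.inter_subset_right)
  have hb : inv (I.sup p ⊓ J.sup p) ⊓ (I.sup p ⊓ J.sup p) = ⊥ := by
    apply inv_injective inv hinv
    rw [inv_bot inv hanti hinv, dm_inf inv hanti hinv, hinv, hinvb]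
    refine top_le_iff.mp ?_
    calc (⊤:α) = (I ∩ J).sup p ⊔ ((I ∩ J)ᶜ).sup p := (sup_compl p htop _).symm
      _ = ((I ∩ J)ᶜ).sup p ⊔ (I ∩ J).sup p := sup_comm _ _
      _ ≤ ((I ∩ J)ᶜ).sup p ⊔ (I.sup p ⊓ J.sup p) := sup_le_sup_left hKle _
      _ ≤ (I.sup p ⊓ J.sup p) ⊔ ((I ∩ J)ᶜ).sup p := le_of_eq (sup_comm _ _)
  refine (sharp_le_eq inv hanti hinv hsp1 ?_ hKle ?_).symm
  · exact sharp_usup inv hanti hinv hsp1 p hpair htop (I ∩ J)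
  · rw [hIeq, ← hinvb]; exact hb

end FinsetPart

end Stmt15Aux

/-- In an sp-orthomodular lattice, for sharp x, y: there exists a
distributive subalgebra containing x and y iff x commutes with y in Sh(A);
moreover, in that case there is such a subalgebra all of whose elements are sharp. -/
theorem stmt_15 {α : Type*} [Lattice α] [BoundedOrder α] (inv : α → α)
    (hanti : ∀ x y : α, x ≤ y → inv y ≤ inv x)
    (hinv : ∀ x : α, inv (inv x) = x)
    (hkle : ∀ x y : α, x ⊓ inv x ≤ y ⊔ inv y)
    (hsp1 : ∀ x y : α, x ≤ y → inv x ⊓ y = (x ⊓ inv x) ⊔ (y ⊓ inv y) →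
        y ⊓ (x ⊔ inv x) = x ⊔ (y ⊓ inv y))
    (hsp2 : ∀ x y : α, x ≤ y →
        (x ⊓ inv x) ⊔ (y ⊓ inv y) = (inv x ⊓ y) ⊓ inv (inv x ⊓ y))
    (x y : α) (hx : x ⊓ inv x = ⊥) (hy : y ⊓ inv y = ⊥) :
    ((∃ S : Set α, x ∈ S ∧ y ∈ S ∧ (⊥ : α) ∈ S ∧ (⊤ : α) ∈ S ∧
        (∀ a ∈ S, ∀ b ∈ S, a ⊓ b ∈ S) ∧ (∀ a ∈ S, ∀ b ∈ S, a ⊔ b ∈ S) ∧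
        (∀ a ∈ S, inv a ∈ S) ∧
        (∀ a ∈ S, ∀ b ∈ S, ∀ d ∈ S, a ⊓ (b ⊔ d) = (a ⊓ b) ⊔ (a ⊓ d))) ↔
      (∃ c d : α, c ⊓ inv c = ⊥ ∧ d ⊓ inv d = ⊥ ∧
        c ≤ x ∧ c ≤ y ∧ (∀ e : α, e ⊓ inv e = ⊥ → e ≤ x → e ≤ y → e ≤ c) ∧
        d ≤ x ∧ d ≤ inv y ∧
        (∀ e : α, e ⊓ inv e = ⊥ → e ≤ x → e ≤ inv y → e ≤ d) ∧
        x = c ⊔ d)) ∧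
    ((∃ c d : α, c ⊓ inv c = ⊥ ∧ d ⊓ inv d = ⊥ ∧
        c ≤ x ∧ c ≤ y ∧ (∀ e : α, e ⊓ inv e = ⊥ → e ≤ x → e ≤ y → e ≤ c) ∧
        d ≤ x ∧ d ≤ inv y ∧
        (∀ e : α, e ⊓ inv e = ⊥ → e ≤ x → e ≤ inv y → e ≤ d) ∧
        x = c ⊔ d) →
      (∃ S : Set α, x ∈ S ∧ y ∈ S ∧ (⊥ : α) ∈ S ∧ (⊤ : α) ∈ S ∧
        (∀ a ∈ S, ∀ b ∈ S, a ⊓ b ∈ S) ∧ (∀ a ∈ S, ∀ b ∈ S, a ⊔ b ∈ S) ∧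
        (∀ a ∈ S, inv a ∈ S) ∧
        (∀ a ∈ S, ∀ b ∈ S, ∀ d ∈ S, a ⊓ (b ⊔ d) = (a ⊓ b) ⊔ (a ⊓ d)) ∧
        (∀ z ∈ S, z ⊓ inv z = ⊥))) := by
  classical
  have hswap : ∀ {a b : α}, a ≤ inv b → b ≤ inv a :=
    fun h => Stmt15Aux.le_inv_swap inv hanti hinv h
  have main : (∃ c d : α, c ⊓ inv c = ⊥ ∧ d ⊓ inv d = ⊥ ∧
        c ≤ x ∧ c ≤ y ∧ (∀ e : α, e ⊓ inv e = ⊥ → e ≤ x → e ≤ y → e ≤ c) ∧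
        d ≤ x ∧ d ≤ inv y ∧
        (∀ e : α, e ⊓ inv e = ⊥ → e ≤ x → e ≤ inv y → e ≤ d) ∧
        x = c ⊔ d) →
      (∃ S : Set α, x ∈ S ∧ y ∈ S ∧ (⊥ : α) ∈ S ∧ (⊤ : α) ∈ S ∧
        (∀ a ∈ S, ∀ b ∈ S, a ⊓ b ∈ S) ∧ (∀ a ∈ S, ∀ b ∈ S, a ⊔ b ∈ S) ∧
        (∀ a ∈ S, inv a ∈ S) ∧
        (∀ a ∈ S, ∀ b ∈ S, ∀ d ∈ S, a ⊓ (b ⊔ d) = (a ⊓ b) ⊔ (a ⊓ d)) ∧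
        (∀ z ∈ S, z ⊓ inv z = ⊥)) := by
    rintro ⟨c, d, hc, hd, -, hcy, -, -, hdy, -, hxcd⟩
    set e := inv c ⊓ y with he_def
    set f := inv d ⊓ inv y with hf_def
    have hiy : inv y ⊓ inv (inv y) = ⊥ := by
      rw [hinv, inf_comm]; exact hy
    have he : e ⊓ inv e = ⊥ := by
      have h2 := hsp2 c y hcy
      rw [hc, hy, bot_sup_eq] at h2
      exact h2.symm
    have hf : f ⊓ inv f = ⊥ := by
      have h2 := hsp2 d (inv y) hdy
      rw [hd, hiy, bot_sup_eq] at h2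
      exact h2.symm
    -- y = c ⊔ e
    have hycue : c ⊔ e = y := by
      refine Stmt15Aux.sharp_le_eq inv hanti hinv hsp1 ?_ (sup_le hcy inf_le_right) ?_
      · rw [Stmt15Aux.dm_sup inv hanti hinv]
        refine le_antisymm ?_ bot_le
        calc (c ⊔ e) ⊓ (inv c ⊓ inv e) ≤ y ⊓ (inv c ⊓ inv e) :=
              inf_le_inf_right _ (sup_le hcy inf_le_right)
          _ = (inv c ⊓ y) ⊓ inv e := by rw [← inf_assoc, inf_comm y (inv c)]
          _ = e ⊓ inv e := by rw [← he_def]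
          _ = ⊥ := he
      · rw [Stmt15Aux.dm_sup inv hanti hinv, inf_right_comm, ← he_def]
        exact he
    -- inv y = d ⊔ f
    have hiyduf : d ⊔ f = inv y := by
      refine Stmt15Aux.sharp_le_eq inv hanti hinv hsp1 ?_ (sup_le hdy inf_le_right) ?_
      · rw [Stmt15Aux.dm_sup inv hanti hinv]
        refine le_antisymm ?_ bot_le
        calc (d ⊔ f) ⊓ (inv d ⊓ inv f) ≤ inv y ⊓ (inv d ⊓ inv f) :=
              inf_le_inf_right _ (sup_le hdy inf_le_right)
          _ = (inv d ⊓ inv y) ⊓ inv f := by rw [← inf_assoc, inf_comm (inv y) (inv d)]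
          _ = f ⊓ inv f := by rw [← hf_def]
          _ = ⊥ := hf
      · rw [Stmt15Aux.dm_sup inv hanti hinv, inf_right_comm, ← hf_def]
        exact hf
    set p : Fin 4 → α := ![c, d, e, f] with hp_def
    have hyinvf : y ≤ inv f := hswap inf_le_right
    have hyinvd : y ≤ inv d := hswap hdy
    have hdc : d ≤ inv c := le_trans hdy (hanti _ _ hcy)
    have hec : e ≤ inv c := inf_le_left
    have hfc : f ≤ inv c := le_trans inf_le_right (hanti _ _ hcy)
    have hed : e ≤ inv d := le_trans inf_le_right hyinvd
    have hfe : f ≤ inv e := le_trans inf_le_right (hanti _ _ (inf_le_right : e ≤ y))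
    have hfd : f ≤ inv d := inf_le_left
    have hcd : c ≤ inv d := hswap hdc
    have hce : c ≤ inv e := hswap hec
    have hde : d ≤ inv e := hswap hed
    have hcf : c ≤ inv f := le_trans hcy hyinvf
    have hdf : d ≤ inv f := hswap hfd
    have hef : e ≤ inv f := le_trans inf_le_right hyinvf
    have hpair : ∀ i j : Fin 4, i ≠ j → p i ≤ inv (p j) := by
      intro i j hij
      fin_cases i <;> fin_cases j <;>
        first
        | exact absurd rfl hij
        | exact hcd
        | exact hce
        | exact hcf
        | exact hdc
        | exact hde
        | exact hdf
        | exact hec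
        | exact hed
        | exact hef
        | exact hfc
        | exact hfd
        | exact hfe
    have htop : Finset.univ.sup p = ⊤ := by
      refine le_antisymm le_top ?_
      rw [← Stmt15Aux.sharp_sup inv hanti hinv hy, ← hiyduf, ← hycue]
      have m : ∀ i : Fin 4, p i ≤ Finset.univ.sup p :=
        fun i => Finset.le_sup (Finset.mem_univ i)
      exact sup_le (sup_le (m 0) (m 2)) (sup_le (m 1) (m 3))
    have hIeq := Stmt15Aux.inv_sup_eq inv hanti hinv hsp1 p hpair htop
    have hmeet := Stmt15Aux.meet_usup inv hanti hinv hsp1 p hpair htop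
    have hsharp := Stmt15Aux.sharp_usup inv hanti hinv hsp1 p hpair htop
    refine ⟨Set.range (fun I : Finset (Fin 4) => I.sup p),
      ⟨{0, 1}, ?_⟩, ⟨{0, 2}, ?_⟩, ⟨∅, Finset.sup_empty⟩, ⟨Finset.univ, htop⟩,
      ?_, ?_, ?_, ?_, ?_⟩
    · show ({0, 1} : Finset (Fin 4)).sup p = x
      rw [show ({0, 1} : Finset (Fin 4)) = insert 0 {1} from rfl,
        Finset.sup_insert, Finset.sup_singleton]
      exact hxcd.symm
    · show ({0, 2} : Finset (Fin 4)).sup p = y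
      rw [show ({0, 2} : Finset (Fin 4)) = insert 0 {2} from rfl,
        Finset.sup_insert, Finset.sup_singleton]
      exact hycue
    · rintro a ⟨I, rfl⟩ b ⟨J, rfl⟩
      exact ⟨I ∩ J, (hmeet I J).symm⟩
    · rintro a ⟨I, rfl⟩ b ⟨J, rfl⟩
      exact ⟨I ∪ J, Finset.sup_union⟩
    · rintro a ⟨I, rfl⟩
      exact ⟨Iᶜ, (hIeq I).symm⟩
    · rintro a ⟨I, rfl⟩ b ⟨J, rfl⟩ k ⟨K, rfl⟩
      simp only
      rw [← Finset.sup_union, hmeet, hmeet, hmeet, ← Finset.sup_union,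
        Finset.inter_union_distrib_left]
    · rintro z ⟨I, rfl⟩
      exact hsharp I
  refine ⟨⟨?_, fun h => ?_⟩, main⟩
  · rintro ⟨S, hxS, hyS, -, -, hinfS, -, hinvS, hdist⟩
    refine ⟨x ⊓ y, x ⊓ inv y, ?_, ?_, inf_le_left, inf_le_right,
      fun e _ he1 he2 => le_inf he1 he2, inf_le_left, inf_le_right,
      fun e _ he1 he2 => le_inf he1 he2, ?_⟩
    · rw [Stmt15Aux.dm_inf inv hanti hinv]
      refine le_antisymm ?_ bot_le
      rw [hdist _ (hinfS x hxS y hyS) _ (hinvS x hxS) _ (hinvS y hyS)]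
      refine sup_le ?_ ?_
      · calc (x ⊓ y) ⊓ inv x ≤ x ⊓ inv x := inf_le_inf_right _ inf_le_left
          _ = ⊥ := hx
      · calc (x ⊓ y) ⊓ inv y ≤ y ⊓ inv y := inf_le_inf_right _ inf_le_right
          _ = ⊥ := hy
    · rw [Stmt15Aux.dm_inf inv hanti hinv, hinv]
      refine le_antisymm ?_ bot_le
      rw [hdist _ (hinfS x hxS _ (hinvS y hyS)) _ (hinvS x hxS) _ hyS]
      refine sup_le ?_ ?_
      · calc (x ⊓ inv y) ⊓ inv x ≤ x ⊓ inv x := inf_le_inf_right _ inf_le_left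
          _ = ⊥ := hx
      · calc (x ⊓ inv y) ⊓ y ≤ inv y ⊓ y := inf_le_inf_right _ inf_le_right
          _ = ⊥ := by rw [inf_comm]; exact hy
    · have hD := hdist x hxS y hyS (inv y) (hinvS y hyS)
      rw [Stmt15Aux.sharp_sup inv hanti hinv hy, inf_top_eq] at hD
      exact hD
  · obtain ⟨S, h1, h2, h3, h4, h5, h6, h7, h8, -⟩ := main h
    exact ⟨S, h1, h2, h3, h4, h5, h6, h7, h8⟩
end

section
/- Let A be a modular pseudo-Kleene lattice and let x, y be elements of A with x C y. Then x ∨ (x' ∧ y') = (x ∨ x') ∧ (x ∨ y'). -/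
/-- Commutativity in a pseudo-Kleene lattice: conditions (C1), (C2), (C3). -/
def PKLComm {α : Type*} [Lattice α] (inv : α → α) (x y : α) : Prop :=
  x ⊓ (y ⊔ inv y) = (x ⊓ y) ⊔ (x ⊓ inv y) ∧
  y ⊓ (x ⊔ inv x) = (y ⊓ x) ⊔ (y ⊓ inv x) ∧
  x ⊓ inv x = ((x ⊓ inv x) ⊓ y) ⊔ ((x ⊓ inv x) ⊓ inv y)

/-- In a modular pseudo-Kleene lattice, if x C y then
x ∨ (x' ∧ y') = (x ∨ x') ∧ (x ∨ y'). -/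
theorem stmt_17 {α : Type*} [Lattice α] [BoundedOrder α] (inv : α → α)
    (hanti : ∀ x y : α, x ≤ y → inv y ≤ inv x)
    (hinv : ∀ x : α, inv (inv x) = x)
    (hkle : ∀ x y : α, x ⊓ inv x ≤ y ⊔ inv y)
    (hmod : ∀ x y z : α, x ≤ z → x ⊔ (y ⊓ z) = (x ⊔ y) ⊓ z)
    (x y : α) (hxy : PKLComm inv x y) :
    x ⊔ (inv x ⊓ inv y) = (x ⊔ inv x) ⊓ (x ⊔ inv y) := by
  obtain ⟨_, hc2, _⟩ := hxy
  -- De Morgan laws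
  have dm_inf : ∀ a b : α, inv (a ⊓ b) = inv a ⊔ inv b := by
    intro a b
    apply le_antisymm
    · have h1 : inv (inv a ⊔ inv b) ≤ inv (inv a) := hanti _ _ le_sup_left
      have h2 : inv (inv a ⊔ inv b) ≤ inv (inv b) := hanti _ _ le_sup_right
      rw [hinv] at h1 h2
      have := hanti _ _ (le_inf h1 h2)
      rwa [hinv] at this
    · exact sup_le (hanti _ _ inf_le_left) (hanti _ _ inf_le_right)
  have dm_sup : ∀ a b : α, inv (a ⊔ b) = inv a ⊓ inv b := by
    intro a b
    have := dm_inf (inv a) (inv b)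
    rw [hinv, hinv] at this
    have h2 := congrArg inv this
    rw [hinv] at h2
    exact h2.symm
  -- dualize (C2): y' ⊔ (x ⊓ x') = (y' ⊔ x') ⊓ (y' ⊔ x)
  have hc2' : inv y ⊔ (x ⊓ inv x) = (inv y ⊔ inv x) ⊓ (inv y ⊔ x) := by
    have h := congrArg inv hc2
    rw [dm_inf, dm_sup, dm_sup, dm_inf, dm_inf, hinv] at h
    rw [inf_comm x (inv x)]
    exact h
  -- t := x' ⊓ (x ⊔ y') equals (x ⊓ x') ⊔ (x' ⊓ y')
  have ht : inv x ⊓ (x ⊔ inv y) = (x ⊓ inv x) ⊔ (inv x ⊓ inv y) := by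
    have h1 : inv x ⊓ (x ⊔ inv y) = inv x ⊓ ((x ⊔ inv y) ⊓ (inv x ⊔ inv y)) := by
      rw [inf_left_comm (inv x), inf_eq_left.mpr (le_sup_left : inv x ≤ inv x ⊔ inv y), inf_comm]
    have h2 : (x ⊔ inv y) ⊓ (inv x ⊔ inv y) = inv y ⊔ (x ⊓ inv x) := by
      rw [hc2']
      rw [inf_comm, sup_comm (inv y) (inv x), sup_comm (inv y) x]
    have h3 : (x ⊓ inv x) ⊔ (inv y ⊓ inv x) = ((x ⊓ inv x) ⊔ inv y) ⊓ inv x :=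
      hmod _ _ _ inf_le_right
    rw [h1, h2, inf_comm (inv x) (inv y), h3, sup_comm (x ⊓ inv x) (inv y), inf_comm]
  -- modularity: x ⊔ (x' ⊓ (x ⊔ y')) = (x ⊔ x') ⊓ (x ⊔ y')
  have hm : x ⊔ (inv x ⊓ (x ⊔ inv y)) = (x ⊔ inv x) ⊓ (x ⊔ inv y) :=
    hmod x (inv x) (x ⊔ inv y) le_sup_left
  rw [ht] at hm
  rw [← hm, ← sup_assoc, sup_inf_self]
end

section
/- Let A be a modular pseudo-Kleene lattice and x, y elements of A. Then the following are equivalent: (1) x C y; (2) y C x; (3) x C y'; (4) x' C y; (5) x C y together with (x ∨ x') ∧ (y ∨ y') = ((x ∨ x') ∧ y) ∨ ((x ∨ x') ∧ y'). -/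
namespace PKL18

set_option linter.unusedSectionVars false

variable {α : Type*} [Lattice α] {inv : α → α}

section Basic

variable (hanti : ∀ x y : α, x ≤ y → inv y ≤ inv x) (hinv : ∀ x : α, inv (inv x) = x)

include hanti hinv

lemma dm_sup (a b : α) : inv (a ⊔ b) = inv a ⊓ inv b := by
  apply le_antisymm
  · exact le_inf (hanti _ _ le_sup_left) (hanti _ _ le_sup_right)
  · have ha : a ≤ inv (inv a ⊓ inv b) := by
      have := hanti _ _ (inf_le_left : inv a ⊓ inv b ≤ inv a); rwa [hinv] at this
    have hb : b ≤ inv (inv a ⊓ inv b) := by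
      have := hanti _ _ (inf_le_right : inv a ⊓ inv b ≤ inv b); rwa [hinv] at this
    have := hanti _ _ (sup_le ha hb); rwa [hinv] at this

lemma dm_inf (a b : α) : inv (a ⊓ b) = inv a ⊔ inv b := by
  have := dm_sup hanti hinv (inv a) (inv b)
  rw [hinv, hinv] at this
  rw [← this, hinv]

lemma flip_le {a b : α} (h : inv a ≤ inv b) : b ≤ a := by
  have := hanti _ _ h; rwa [hinv, hinv] at this

lemma inv_invol_sup (x : α) : inv (x ⊔ inv x) = x ⊓ inv x := by
  rw [dm_sup hanti hinv, hinv, inf_comm]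

lemma inv_invol_inf (x : α) : inv (x ⊓ inv x) = x ⊔ inv x := by
  rw [dm_inf hanti hinv, hinv, sup_comm]

end Basic

section Main

variable (hanti : ∀ x y : α, x ≤ y → inv y ≤ inv x)
  (hinv : ∀ x : α, inv (inv x) = x)
  (hkle : ∀ x y : α, x ⊓ inv x ≤ y ⊔ inv y)
  (hmod : ∀ x y z : α, x ≤ z → x ⊔ (y ⊓ z) = (x ⊔ y) ⊓ z)

include hanti hinv hkle hmod

/-- From C3: `(x⊔x')⊓(y⊔y') ≤ y' ⊔ (y ⊓ (x⊔x'))`. -/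
lemma lemT {x y : α}
    (h3 : x ⊓ inv x = ((x ⊓ inv x) ⊓ y) ⊔ ((x ⊓ inv x) ⊓ inv y)) :
    (x ⊔ inv x) ⊓ (y ⊔ inv y) ≤ inv y ⊔ (y ⊓ (x ⊔ inv x)) := by
  have hinvE : inv (x ⊔ inv x) = x ⊓ inv x := inv_invol_sup hanti hinv x
  have hC3flip : ((x ⊔ inv x) ⊔ inv y) ⊓ ((x ⊔ inv x) ⊔ y) ≤ x ⊔ inv x := by
    apply flip_le hanti hinv
    have h4 : inv (((x ⊔ inv x) ⊔ inv y) ⊓ ((x ⊔ inv x) ⊔ y)) =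
        ((x ⊓ inv x) ⊓ inv (inv y)) ⊔ ((x ⊓ inv x) ⊓ inv y) := by
      rw [dm_inf hanti hinv ((x ⊔ inv x) ⊔ inv y) ((x ⊔ inv x) ⊔ y),
        dm_sup hanti hinv (x ⊔ inv x) (inv y),
        dm_sup hanti hinv (x ⊔ inv x) y, hinvE]
    rw [h4, hinvE, hinv]
    exact h3.le
  -- A := ((x⊔x') ⊔ y') ⊓ (y ⊔ y')
  have hAy : ((((x ⊔ inv x) ⊔ inv y) ⊓ (y ⊔ inv y)) ⊓ y) ≤ y ⊓ (x ⊔ inv x) := by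
    refine le_inf inf_le_right (le_trans (le_inf ?_ ?_) hC3flip)
    · exact inf_le_of_left_le inf_le_left
    · exact le_trans inf_le_right le_sup_right
  have hyA : inv y ≤ ((x ⊔ inv x) ⊔ inv y) ⊓ (y ⊔ inv y) :=
    le_inf le_sup_right le_sup_right
  have hmodA : inv y ⊔ (y ⊓ (((x ⊔ inv x) ⊔ inv y) ⊓ (y ⊔ inv y)))
      = (inv y ⊔ y) ⊓ (((x ⊔ inv x) ⊔ inv y) ⊓ (y ⊔ inv y)) := hmod _ _ _ hyA
  have hAF : ((x ⊔ inv x) ⊔ inv y) ⊓ (y ⊔ inv y) ≤ inv y ⊔ y :=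
    le_trans inf_le_right (by rw [sup_comm])
  have hAeq : ((x ⊔ inv x) ⊔ inv y) ⊓ (y ⊔ inv y)
      = inv y ⊔ (y ⊓ (((x ⊔ inv x) ⊔ inv y) ⊓ (y ⊔ inv y))) := by
    rw [hmodA, inf_eq_right.mpr hAF]
  have hfin : ((x ⊔ inv x) ⊔ inv y) ⊓ (y ⊔ inv y) ≤ inv y ⊔ (y ⊓ (x ⊔ inv x)) := by
    nth_rewrite 1 [hAeq]
    refine sup_le le_sup_left (le_sup_of_le_right ?_)
    rw [inf_comm] at hAy
    exact hAy
  exact le_trans (le_inf (le_trans inf_le_left le_sup_left) inf_le_right) hfin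

/-- From C3: the "five" identity. -/
lemma lemM {x y : α}
    (h3 : x ⊓ inv x = ((x ⊓ inv x) ⊓ y) ⊔ ((x ⊓ inv x) ⊓ inv y)) :
    (x ⊔ inv x) ⊓ (y ⊔ inv y) = (y ⊓ (x ⊔ inv x)) ⊔ (inv y ⊓ (x ⊔ inv x)) := by
  have hyEG : y ⊓ (x ⊔ inv x) ≤ (x ⊔ inv x) ⊓ (y ⊔ inv y) :=
    le_inf inf_le_right (le_sup_of_le_left inf_le_left)
  have hT : (x ⊔ inv x) ⊓ (y ⊔ inv y) ≤ (y ⊓ (x ⊔ inv x)) ⊔ inv y := by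
    rw [sup_comm (y ⊓ (x ⊔ inv x)) (inv y)]
    exact lemT hanti hinv hkle hmod h3
  have hmodG : (y ⊓ (x ⊔ inv x)) ⊔ (inv y ⊓ ((x ⊔ inv x) ⊓ (y ⊔ inv y)))
      = ((y ⊓ (x ⊔ inv x)) ⊔ inv y) ⊓ ((x ⊔ inv x) ⊓ (y ⊔ inv y)) := hmod _ _ _ hyEG
  have hyG : inv y ⊓ ((x ⊔ inv x) ⊓ (y ⊔ inv y)) = inv y ⊓ (x ⊔ inv x) := by
    apply le_antisymm
    · exact le_inf inf_le_left (le_trans inf_le_right inf_le_left)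
    · exact le_inf inf_le_left (le_inf inf_le_right (le_sup_of_le_right inf_le_left))
  calc (x ⊔ inv x) ⊓ (y ⊔ inv y)
      = ((y ⊓ (x ⊔ inv x)) ⊔ inv y) ⊓ ((x ⊔ inv x) ⊓ (y ⊔ inv y)) :=
        (inf_eq_right.mpr hT).symm
  _ = (y ⊓ (x ⊔ inv x)) ⊔ (inv y ⊓ ((x ⊔ inv x) ⊓ (y ⊔ inv y))) := hmodG.symm
  _ = (y ⊓ (x ⊔ inv x)) ⊔ (inv y ⊓ (x ⊔ inv x)) := by rw [hyG]

/-- Key lemma K (from C2 and C3). -/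
lemma lemK {x y : α}
    (h2 : y ⊓ (x ⊔ inv x) = (y ⊓ x) ⊔ (y ⊓ inv x))
    (h3 : x ⊓ inv x = ((x ⊓ inv x) ⊓ y) ⊔ ((x ⊓ inv x) ⊓ inv y)) :
    (x ⊓ y) ⊓ (inv x ⊔ inv y) ≤ ((x ⊓ inv x) ⊓ y) ⊔ (x ⊓ (y ⊓ inv y)) := by
  -- step 1 : d ≤ y' ⊔ w2, where w2 := x' ⊓ (y' ⊔ (x⊓y))
  have hs1 : (x ⊓ y) ⊓ (inv x ⊔ inv y) ≤ inv y ⊔ (inv x ⊓ (inv y ⊔ (x ⊓ y))) := by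
    have hm := hmod (inv y) (inv x) (inv y ⊔ ((x ⊓ y) ⊓ (inv x ⊔ inv y))) le_sup_left
    have h0 : (x ⊓ y) ⊓ (inv x ⊔ inv y) ≤
        (inv y ⊔ inv x) ⊓ (inv y ⊔ ((x ⊓ y) ⊓ (inv x ⊔ inv y))) :=
      le_inf (le_trans inf_le_right (by rw [sup_comm])) le_sup_right
    rw [← hm] at h0
    exact le_trans h0 (sup_le le_sup_left (le_sup_of_le_right
      (inf_le_inf_left _ (sup_le le_sup_left (le_sup_of_le_right inf_le_left)))))
  -- hs4 : y ⊓ (x⊔x') ≤ (x⊓y) ⊔ (y ⊓ (x'⊔y'))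
  have hs4 : y ⊓ (x ⊔ inv x) ≤ (x ⊓ y) ⊔ (y ⊓ (inv x ⊔ inv y)) := by
    rw [h2]
    refine sup_le (le_sup_of_le_left (by rw [inf_comm])) (le_sup_of_le_right ?_)
    exact le_inf inf_le_left (le_trans inf_le_right le_sup_left)
  -- hs5 : ((x⊔x')⊔y') ⊓ (y⊔y') ≤ (y⊓(x'⊔y')) ⊔ (y' ⊔ (x⊓y))
  have hs5 : ((x ⊔ inv x) ⊔ inv y) ⊓ (y ⊔ inv y) ≤
      (y ⊓ (inv x ⊔ inv y)) ⊔ (inv y ⊔ (x ⊓ y)) := by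
    have hm := hmod (inv y) (x ⊔ inv x) (y ⊔ inv y) le_sup_right
    have hL : ((x ⊔ inv x) ⊔ inv y) ⊓ (y ⊔ inv y)
        = inv y ⊔ ((x ⊔ inv x) ⊓ (y ⊔ inv y)) := by
      rw [hm, sup_comm (inv y) (x ⊔ inv x)]
    rw [hL]
    refine sup_le (le_sup_of_le_right le_sup_left) ?_
    refine le_trans (lemT hanti hinv hkle hmod h3) ?_
    refine sup_le (le_sup_of_le_right le_sup_left) ?_
    refine le_trans hs4 ?_
    exact sup_le (le_sup_of_le_right le_sup_right) le_sup_left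
  -- flip hs5 to get hσ
  have hfl := hanti _ _ hs5
  have eqR : inv ((y ⊓ (inv x ⊔ inv y)) ⊔ (inv y ⊔ (x ⊓ y)))
      = (inv y ⊔ (x ⊓ y)) ⊓ (y ⊓ (inv x ⊔ inv y)) := by
    rw [dm_sup hanti hinv (y ⊓ (inv x ⊔ inv y)) (inv y ⊔ (x ⊓ y)),
      dm_inf hanti hinv y (inv x ⊔ inv y),
      dm_sup hanti hinv (inv x) (inv y),
      dm_sup hanti hinv (inv y) (x ⊓ y),
      dm_inf hanti hinv x y, hinv, hinv]
  have eqL : inv (((x ⊔ inv x) ⊔ inv y) ⊓ (y ⊔ inv y))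
      = ((x ⊓ inv x) ⊓ y) ⊔ (y ⊓ inv y) := by
    rw [dm_inf hanti hinv ((x ⊔ inv x) ⊔ inv y) (y ⊔ inv y),
      dm_sup hanti hinv (x ⊔ inv x) (inv y),
      inv_invol_sup hanti hinv x, inv_invol_sup hanti hinv y, hinv]
  rw [eqR, eqL] at hfl
  -- hfl : (y' ⊔ (x⊓y)) ⊓ (y ⊓ (x'⊔y')) ≤ ((x⊓x')⊓y) ⊔ (y⊓y')
  -- ν := (x'⊔y') ⊓ (y' ⊔ (x⊓y)) ; ν = y' ⊔ (y⊓ν), y⊓ν ≤ σ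
  have hyν : inv y ≤ (inv x ⊔ inv y) ⊓ (inv y ⊔ (x ⊓ y)) := le_inf le_sup_right le_sup_left
  have hm2 := hmod (inv y) y ((inv x ⊔ inv y) ⊓ (inv y ⊔ (x ⊓ y))) hyν
  have hνF : (inv x ⊔ inv y) ⊓ (inv y ⊔ (x ⊓ y)) ≤ inv y ⊔ y :=
    le_trans inf_le_right (sup_le le_sup_left (le_sup_of_le_right inf_le_right))
  have hνeq : (inv x ⊔ inv y) ⊓ (inv y ⊔ (x ⊓ y))
      = inv y ⊔ (y ⊓ ((inv x ⊔ inv y) ⊓ (inv y ⊔ (x ⊓ y)))) := by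
    rw [hm2, inf_eq_right.mpr hνF]
  have hyνσ : y ⊓ ((inv x ⊔ inv y) ⊓ (inv y ⊔ (x ⊓ y))) ≤
      (inv y ⊔ (x ⊓ y)) ⊓ (y ⊓ (inv x ⊔ inv y)) :=
    le_inf (le_trans inf_le_right inf_le_right)
      (le_inf inf_le_left (le_trans inf_le_right inf_le_left))
  have hw2ν : inv x ⊓ (inv y ⊔ (x ⊓ y)) ≤ (inv x ⊔ inv y) ⊓ (inv y ⊔ (x ⊓ y)) :=
    inf_le_inf_right _ le_sup_left
  have hw2 : inv x ⊓ (inv y ⊔ (x ⊓ y)) ≤ inv y ⊔ ((x ⊓ inv x) ⊓ y) := by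
    refine le_trans hw2ν ?_
    rw [hνeq]
    refine sup_le le_sup_left ?_
    refine le_trans hyνσ (le_trans hfl ?_)
    exact sup_le le_sup_right (le_sup_of_le_left inf_le_right)
  -- d ≤ y' ⊔ e1
  have hdY : (x ⊓ y) ⊓ (inv x ⊔ inv y) ≤ inv y ⊔ ((x ⊓ inv x) ⊓ y) :=
    le_trans hs1 (sup_le le_sup_left hw2)
  -- finish
  have he1d : (x ⊓ inv x) ⊓ y ≤ (x ⊓ y) ⊓ (inv x ⊔ inv y) :=
    le_inf (le_inf (le_trans inf_le_left inf_le_left) inf_le_right)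
      (le_trans inf_le_left (le_trans inf_le_right le_sup_left))
  have hmodd := hmod ((x ⊓ inv x) ⊓ y) (inv y) ((x ⊓ y) ⊓ (inv x ⊔ inv y)) he1d
  have hdeq : (x ⊓ y) ⊓ (inv x ⊔ inv y) ≤
      ((x ⊓ inv x) ⊓ y) ⊔ (inv y ⊓ ((x ⊓ y) ⊓ (inv x ⊔ inv y))) := by
    rw [hmodd]
    exact le_inf (le_trans hdY (by rw [sup_comm])) le_rfl
  have hyd : inv y ⊓ ((x ⊓ y) ⊓ (inv x ⊔ inv y)) ≤ x ⊓ (y ⊓ inv y) :=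
    le_inf (le_trans inf_le_right (le_trans inf_le_left inf_le_left))
      (le_inf (le_trans inf_le_right (le_trans inf_le_left inf_le_right)) inf_le_left)
  exact le_trans hdeq (sup_le le_sup_left (le_sup_of_le_right hyd))

/-- L1: C3 for the swapped pair. -/
lemma lemL1 {x y : α}
    (h2 : y ⊓ (x ⊔ inv x) = (y ⊓ x) ⊔ (y ⊓ inv x))
    (h3 : x ⊓ inv x = ((x ⊓ inv x) ⊓ y) ⊔ ((x ⊓ inv x) ⊓ inv y)) :
    y ⊓ inv y = ((y ⊓ inv y) ⊓ x) ⊔ ((y ⊓ inv y) ⊓ inv x) := by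
  have hfE : y ⊓ inv y ≤ x ⊔ inv x := hkle y x
  have ha : y ⊓ inv y ≤ inv x ⊔ (x ⊓ y) := by
    have h0 : y ⊓ inv y ≤ y ⊓ (x ⊔ inv x) := le_inf inf_le_left hfE
    rw [h2] at h0
    exact le_trans h0 (sup_le (le_sup_of_le_right (by rw [inf_comm]))
      (le_sup_of_le_left inf_le_right))
  have hb : y ⊓ inv y ≤ inv x ⊔ ((x ⊓ y) ⊓ (inv x ⊔ inv y)) := by
    have hm := hmod (inv x) (x ⊓ y) (inv x ⊔ inv y) le_sup_left
    rw [hm]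
    exact le_inf ha (le_sup_of_le_right inf_le_right)
  have hc' : y ⊓ inv y ≤ inv x ⊔ (x ⊓ (y ⊓ inv y)) := by
    refine le_trans hb (sup_le le_sup_left
      (le_trans (lemK hanti hinv hkle hmod h2 h3) ?_))
    exact sup_le (le_sup_of_le_left (le_trans inf_le_left inf_le_right)) le_sup_right
  have hf1f : x ⊓ (y ⊓ inv y) ≤ y ⊓ inv y := inf_le_right
  have hm2 := hmod (x ⊓ (y ⊓ inv y)) (inv x) (y ⊓ inv y) hf1f
  have hkey : y ⊓ inv y = (x ⊓ (y ⊓ inv y)) ⊔ (inv x ⊓ (y ⊓ inv y)) := by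
    rw [hm2]
    exact (inf_eq_right.mpr (le_trans hc' (by rw [sup_comm]))).symm
  rw [inf_comm (y ⊓ inv y) x, inf_comm (y ⊓ inv y) (inv x)]
  exact hkey

/-- ξ-lemma from C1. -/
lemma lemXi {x y : α}
    (h1 : x ⊓ (y ⊔ inv y) = (x ⊓ y) ⊔ (x ⊓ inv y)) :
    inv y ⊓ (x ⊔ y) = (x ⊓ inv y) ⊔ (y ⊓ inv y) := by
  have hstep : (x ⊔ y) ⊓ (y ⊔ inv y) = y ⊔ (x ⊓ inv y) := by
    have hm := hmod y x (y ⊔ inv y) le_sup_left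
    rw [h1] at hm
    have h5 : y ⊔ ((x ⊓ y) ⊔ (x ⊓ inv y)) = y ⊔ (x ⊓ inv y) := by
      rw [← sup_assoc, sup_eq_left.mpr (inf_le_right : x ⊓ y ≤ y)]
    rw [h5] at hm
    rw [sup_comm x y]
    exact hm.symm
  have hxi : inv y ⊓ (x ⊔ y) = inv y ⊓ (y ⊔ (x ⊓ inv y)) := by
    rw [← hstep, ← inf_assoc]
    exact (inf_eq_left.mpr (le_trans inf_le_left le_sup_right)).symm
  rw [hxi]
  have hm2 := hmod (x ⊓ inv y) y (inv y) inf_le_right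
  rw [hm2, sup_comm (x ⊓ inv y) y, inf_comm (inv y) (y ⊔ (x ⊓ inv y))]

/-- lemB from C1, C2, C3. -/
lemma lemB {x y : α}
    (h1 : x ⊓ (y ⊔ inv y) = (x ⊓ y) ⊔ (x ⊓ inv y))
    (h2 : y ⊓ (x ⊔ inv x) = (y ⊓ x) ⊔ (y ⊓ inv x))
    (h3 : x ⊓ inv x = ((x ⊓ inv x) ⊓ y) ⊔ ((x ⊓ inv x) ⊓ inv y)) :
    inv y ⊓ (x ⊔ inv x) = (inv y ⊓ x) ⊔ (inv y ⊓ inv x) := by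
  have hL1 : y ⊓ inv y = ((y ⊓ inv y) ⊓ x) ⊔ ((y ⊓ inv y) ⊓ inv x) :=
    lemL1 hanti hinv hkle hmod h2 h3
  have hM : (y ⊔ inv y) ⊓ (x ⊔ inv x) = (x ⊓ (y ⊔ inv y)) ⊔ (inv x ⊓ (y ⊔ inv y)) :=
    lemM hanti hinv hkle hmod (x := y) (y := x) hL1
  have hXi := lemXi hanti hinv hkle hmod h1
  have hξ : inv y ⊓ (x ⊔ y) ≤ x ⊔ (y ⊓ inv y) := by
    rw [hXi]
    exact sup_le (le_sup_of_le_left inf_le_left) le_sup_right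
  have h6 := hanti _ _ hξ
  have eqA : inv (x ⊔ (y ⊓ inv y)) = inv x ⊓ (y ⊔ inv y) := by
    rw [dm_sup hanti hinv x (y ⊓ inv y), dm_inf hanti hinv y (inv y), hinv,
      sup_comm (inv y) y]
  have eqB : inv (inv y ⊓ (x ⊔ y)) = y ⊔ (inv x ⊓ inv y) := by
    rw [dm_inf hanti hinv (inv y) (x ⊔ y), dm_sup hanti hinv x y, hinv]
  rw [eqA, eqB] at h6
  have hEF : (x ⊔ inv x) ⊓ (y ⊔ inv y) ≤ y ⊔ ((inv y ⊓ x) ⊔ (inv y ⊓ inv x)) := by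
    rw [inf_comm (x ⊔ inv x) (y ⊔ inv y), hM, h1]
    refine sup_le (sup_le (le_sup_of_le_left inf_le_right) ?_) ?_
    · exact le_sup_of_le_right (le_sup_of_le_left (by rw [inf_comm]))
    · refine le_trans h6 (sup_le le_sup_left (le_sup_of_le_right ?_))
      exact le_sup_of_le_right (by rw [inf_comm])
  have htEF : inv y ⊓ (x ⊔ inv x) ≤ (x ⊔ inv x) ⊓ (y ⊔ inv y) :=
    le_inf inf_le_right (le_sup_of_le_right inf_le_left)
  have hXt : (inv y ⊓ x) ⊔ (inv y ⊓ inv x) ≤ inv y ⊓ (x ⊔ inv x) :=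
    sup_le (le_inf inf_le_left (le_sup_of_le_left inf_le_right))
      (le_inf inf_le_left (le_sup_of_le_right inf_le_right))
  have hmodt := hmod ((inv y ⊓ x) ⊔ (inv y ⊓ inv x)) y (inv y ⊓ (x ⊔ inv x)) hXt
  have hyt : y ⊓ (inv y ⊓ (x ⊔ inv x)) = y ⊓ inv y := by
    apply le_antisymm
    · exact le_inf inf_le_left (le_trans inf_le_right inf_le_left)
    · exact le_inf inf_le_left (le_inf inf_le_right (hkle y x))
  have hfX : y ⊓ inv y ≤ (inv y ⊓ x) ⊔ (inv y ⊓ inv x) := by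
    rw [hL1]
    refine sup_le (le_sup_of_le_left ?_) (le_sup_of_le_right ?_)
    · exact le_inf (le_trans inf_le_left inf_le_right) inf_le_right
    · exact le_inf (le_trans inf_le_left inf_le_right) inf_le_right
  have hkey : inv y ⊓ (x ⊔ inv x)
      = ((inv y ⊓ x) ⊔ (inv y ⊓ inv x)) ⊔ (y ⊓ (inv y ⊓ (x ⊔ inv x))) := by
    rw [hmodt]
    exact (inf_eq_right.mpr (le_trans (le_trans htEF hEF) (by rw [sup_comm]))).symm
  rw [hkey, hyt, sup_eq_left.mpr hfX]

end Main
end PKL18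

/-- In a modular pseudo-Kleene lattice the following are equivalent:
(1) x C y; (2) y C x; (3) x C y'; (4) x' C y;
(5) x C y together with (x ∨ x') ∧ (y ∨ y') = ((x ∨ x') ∧ y) ∨ ((x ∨ x') ∧ y'). -/
theorem stmt_18 {α : Type*} [Lattice α] [BoundedOrder α] (inv : α → α)
    (hanti : ∀ x y : α, x ≤ y → inv y ≤ inv x)
    (hinv : ∀ x : α, inv (inv x) = x)
    (hkle : ∀ x y : α, x ⊓ inv x ≤ y ⊔ inv y)
    (hmod : ∀ x y z : α, x ≤ z → x ⊔ (y ⊓ z) = (x ⊔ y) ⊓ z)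
    (x y : α) :
    (PKLComm inv x y ↔ PKLComm inv y x) ∧
    (PKLComm inv x y ↔ PKLComm inv x (inv y)) ∧
    (PKLComm inv x y ↔ PKLComm inv (inv x) y) ∧
    (PKLComm inv x y ↔ (PKLComm inv x y ∧
      (x ⊔ inv x) ⊓ (y ⊔ inv y) =
        ((x ⊔ inv x) ⊓ y) ⊔ ((x ⊔ inv x) ⊓ inv y))) := by
  have sym : ∀ u v : α, PKLComm inv u v → PKLComm inv v u := by
    rintro u v ⟨h1, h2, h3⟩
    exact ⟨h2, h1, PKL18.lemL1 hanti hinv hkle hmod h2 h3⟩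
  have toInv : ∀ u v : α, PKLComm inv u v → PKLComm inv u (inv v) := by
    rintro u v ⟨h1, h2, h3⟩
    refine ⟨?_, ?_, ?_⟩
    · rw [hinv, sup_comm (inv v) v, sup_comm (u ⊓ inv v) (u ⊓ v)]
      exact h1
    · exact PKL18.lemB hanti hinv hkle hmod h1 h2 h3
    · rw [hinv, sup_comm (u ⊓ inv u ⊓ inv v) (u ⊓ inv u ⊓ v)]
      exact h3
  constructor
  · exact ⟨sym x y, sym y x⟩
  refine ⟨?_, ?_, ?_⟩
  · constructor
    · exact toInv x y
    · intro h
      have := toInv x (inv y) h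
      rwa [hinv] at this
  · constructor
    · intro h
      exact sym y (inv x) (toInv y x (sym x y h))
    · intro h
      have := toInv y (inv x) (sym (inv x) y h)
      rw [hinv] at this
      exact sym y x this
  · constructor
    · intro h
      refine ⟨h, ?_⟩
      obtain ⟨h1, h2, h3⟩ := h
      have := PKL18.lemM hanti hinv hkle hmod h3
      rw [this, inf_comm y _, inf_comm (inv y) _]
    · rintro ⟨h, -⟩
      exact h
end
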